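/- arXiv:1501.06988 — 8 statements merged into one kernel-verified Lean document; each statement's English description precedes it below -/
import Mathlib

section
/- The downlink and the dual uplink admission-control problems have equal optimal values: the infimum of Σ_{i=1}^N x_i over all p ∈ ℝ^N with p ≥ 0, unit-norm beamformers u_1,…,u_N ∈ ℂ^M, and x ∈ ℝ^N with x ≥ 0 satisfying, for every i, (p_i/M)|h_i^H u_i|² ≥ (γ_i/(1+x_i))·(Σ_{j≠i}(p_j/M)|h_i^H u_j|² + n_i) and (1/M)Σ_{i=1}^N w_i p_i ≤ P, equals the infimum of Σ_{i=1}^N x_i over all q ∈ ℝ^N with q ≥ 0, unit-norm u_1,…,u_N ∈ ℂ^M, and x ≥ 0 satisfying, for every i, (q_i/M)|u_i^H h_i|² ≥ (γ_i/(1+x_i))·(Σ_{j≠i}(q_j/M)|u_i^H h_j|² + w_i) and (1/M)Σ_{i=1}^N n_i q_i ≤ P. -/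
/-!
Fix the beamformers and SINR margins `δ_i = γ_i / (1 + x_i)`. Dividing the downlink constraint of
user `i` by its own gain `G_ii` puts it in the form `A p + b ≤ p` with `A ≥ 0` the normalized
cross-gain matrix and `b > 0`. Such a strictly subinvariant vector forces the Neumann iteration
`L ← ω + Aᵀ L` to be increasing and bounded (since `b ⬝ L_k ≤ ω ⬝ p`), hence convergent; the
rescaled limit `q_i = δ_i L_i / G_ii` meets the uplink constraints, in which the gains are
transposed and noise and power weights trade places, with uplink cost `σ ⬝ q = b ⬝ L ≤ ω ⬝ p`.
The construction is symmetric, so the two problems have the same set of attainable objective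
values, not just the same infimum.
-/

open Matrix Finset

open Filter

section NeumannIteration

variable {ι : Type*} [Fintype ι]

/-- The partial sums `c + c A + ⋯ + c Aᵏ⁻¹` of the Neumann series of `c (1 - A)⁻¹`. -/
def neumannIter (A : Matrix ι ι ℝ) (c : ι → ℝ) : ℕ → ι → ℝ
  | 0 => 0
  | k + 1 => c + neumannIter A c k ᵥ* A

variable {A : Matrix ι ι ℝ} {b c p : ι → ℝ}

lemma vecMul_mono_of_nonneg (hA : ∀ i j, 0 ≤ A i j) {v w : ι → ℝ} (h : v ≤ w) :
    v ᵥ* A ≤ w ᵥ* A :=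
  fun j => dotProduct_le_dotProduct_of_nonneg_right h fun i => hA i j

lemma neumannIter_monotone (hA : ∀ i j, 0 ≤ A i j) (hc : 0 ≤ c) :
    Monotone (neumannIter A c) := by
  refine monotone_nat_of_le_succ fun k => ?_
  induction k with
  | zero => simpa [neumannIter] using hc
  | succ k ih => exact add_le_add le_rfl (vecMul_mono_of_nonneg hA ih)

lemma neumannIter_nonneg (hA : ∀ i j, 0 ≤ A i j) (hc : 0 ≤ c) (k : ℕ) :
    0 ≤ neumannIter A c k :=
  neumannIter_monotone hA hc k.zero_le

lemma dotProduct_neumannIter_le (hA : ∀ i j, 0 ≤ A i j) (hc : 0 ≤ c) (hp : 0 ≤ p)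
    (hsub : A *ᵥ p + b ≤ p) (k : ℕ) : b ⬝ᵥ neumannIter A c k ≤ c ⬝ᵥ p := by
  set q := neumannIter A c
  have hstep : q (k + 1) = c + q k ᵥ* A := rfl
  calc b ⬝ᵥ q k ≤ (p - A *ᵥ p) ⬝ᵥ q k :=
        dotProduct_le_dotProduct_of_nonneg_right (le_sub_iff_add_le'.mpr hsub)
          (neumannIter_nonneg hA hc k)
    _ = p ⬝ᵥ q k - p ⬝ᵥ q (k + 1) + c ⬝ᵥ p := by
        rw [hstep, sub_dotProduct, dotProduct_comm (A *ᵥ p), dotProduct_mulVec,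
          dotProduct_add, dotProduct_comm p c, dotProduct_comm (q k ᵥ* A)]
        ring
    _ ≤ c ⬝ᵥ p := by
        linarith [dotProduct_le_dotProduct_of_nonneg_left (neumannIter_monotone hA hc
          k.le_succ) hp]

/-- A nonnegative matrix with a strictly subinvariant nonnegative vector, `A p + b ≤ p` with
`b > 0`, has spectral radius `< 1`; so `q = c + q A` is solved by the Neumann series. -/
theorem exists_eq_add_vecMul_of_subinvariant (hA : ∀ i j, 0 ≤ A i j) (hc : 0 ≤ c)
    (hb : ∀ i, 0 < b i) (hp : 0 ≤ p) (hsub : A *ᵥ p + b ≤ p) :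
    ∃ q, 0 ≤ q ∧ c + q ᵥ* A = q ∧ b ⬝ᵥ q ≤ c ⬝ᵥ p := by
  have hbound := dotProduct_neumannIter_le hA hc hp hsub
  have hbdd : BddAbove (Set.range (neumannIter A c)) := by
    refine ⟨fun i => c ⬝ᵥ p / b i, ?_⟩
    rintro _ ⟨k, rfl⟩ i
    rw [le_div_iff₀' (hb i)]
    refine (single_le_sum (f := fun j => b j * neumannIter A c k j) (fun j _ => ?_)
      (mem_univ i)).trans (hbound k)
    exact mul_nonneg (hb j).le (neumannIter_nonneg hA hc k j)
  have hlim := tendsto_atTop_ciSup (neumannIter_monotone hA hc) hbdd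
  set q := ⨆ k, neumannIter A c k
  refine ⟨q, (neumannIter_nonneg hA hc 0).trans (le_ciSup hbdd 0), ?_, ?_⟩
  · have hcont : Continuous fun v : ι → ℝ => c + v ᵥ* A := by fun_prop
    exact tendsto_nhds_unique ((hcont.tendsto q).comp hlim)
      (hlim.comp (tendsto_add_atTop_nat 1))
  · exact le_of_tendsto (((continuous_const.dotProduct continuous_id).tendsto q).comp hlim)
      (Eventually.of_forall hbound)

end NeumannIteration

section SINR

variable {ι : Type*} [Fintype ι] [DecidableEq ι]

/-- Powers `p` give every user `i` signal-to-interference-plus-noise ratio at least `δ i`, where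
`G i j` is the gain from the transmitter of user `j` to the receiver of user `i` and `σ i` the
noise at receiver `i`. -/
def SINRFeasible (G : Matrix ι ι ℝ) (δ σ p : ι → ℝ) : Prop :=
  ∀ i, δ i * (∑ j ∈ univ.erase i, p j * G i j + σ i) ≤ p i * G i i

variable {G : Matrix ι ι ℝ} {δ σ ω p : ι → ℝ}

lemma SINRFeasible.diag_pos (hfeas : SINRFeasible G δ σ p) (hG : ∀ i j, 0 ≤ G i j)
    (hδ : ∀ i, 0 < δ i) (hσ : ∀ i, 0 < σ i) (hp : 0 ≤ p) (i : ι) : 0 < G i i := by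
  have hinterference : 0 ≤ ∑ j ∈ univ.erase i, p j * G i j :=
    sum_nonneg fun j _ => mul_nonneg (hp j) (hG i j)
  have hsignal : 0 < p i * G i i :=
    (mul_pos (hδ i) (by linarith [hσ i])).trans_le (hfeas i)
  exact pos_of_mul_pos_right hsignal (hp i)

/-- The uplink powers are `q i = δ i * L i / G i i`, where `L = ω + L A` is the Neumann fixed
point for the normalized cross-gain matrix `A i j = δ i * G i j / G i i` (`j ≠ i`). -/
theorem SINRFeasible.exists_transpose (hfeas : SINRFeasible G δ σ p) (hG : ∀ i j, 0 ≤ G i j)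
    (hδ : ∀ i, 0 < δ i) (hσ : ∀ i, 0 < σ i) (hω : 0 ≤ ω) (hp : 0 ≤ p) :
    ∃ q, 0 ≤ q ∧ SINRFeasible Gᵀ δ ω q ∧ σ ⬝ᵥ q ≤ ω ⬝ᵥ p := by
  have hdiag := hfeas.diag_pos hG hδ hσ hp
  set A : Matrix ι ι ℝ := of fun i j => if j = i then 0 else δ i * G i j / G i i
  have hA : ∀ i j, 0 ≤ A i j := fun i j => by
    simp only [A, of_apply]
    split_ifs
    exacts [le_rfl, div_nonneg (mul_nonneg (hδ i).le (hG i j)) (hdiag i).le]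
  have hA_mulVec : ∀ i, (A *ᵥ p) i = δ i / G i i * ∑ j ∈ univ.erase i, p j * G i j := by
    intro i
    rw [mul_sum, mulVec, dotProduct,
      ← sum_erase (f := fun j => A i j * p j) (a := i) _ (by simp [A])]
    refine sum_congr rfl fun j hj => ?_
    simp only [A, of_apply, if_neg (ne_of_mem_erase hj)]
    ring
  have hA_vecMul : ∀ (v : ι → ℝ) i,
      (v ᵥ* A) i = ∑ j ∈ univ.erase i, δ j * v j / G j j * G j i := by
    intro v i
    rw [vecMul, dotProduct, ← sum_erase (f := fun j => v j * A j i) (a := i) _ (by simp [A])]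
    refine sum_congr rfl fun j hj => ?_
    simp only [A, of_apply, if_neg (ne_of_mem_erase hj).symm]
    ring
  set b : ι → ℝ := fun i => δ i * σ i / G i i
  have hb : ∀ i, 0 < b i := fun i => div_pos (mul_pos (hδ i) (hσ i)) (hdiag i)
  have hsub : A *ᵥ p + b ≤ p := fun i => by
    have hnormalized : δ i / G i i * ∑ j ∈ univ.erase i, p j * G i j + b i
        = δ i * (∑ j ∈ univ.erase i, p j * G i j + σ i) / G i i := by
      simp only [b]; ring
    rw [Pi.add_apply, hA_mulVec, hnormalized, div_le_iff₀ (hdiag i)]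
    exact hfeas i
  obtain ⟨L, hL, hLfix, hLbudget⟩ := exists_eq_add_vecMul_of_subinvariant hA hω hb hp hsub
  refine ⟨fun i => δ i * L i / G i i, fun i => div_nonneg (mul_nonneg (hδ i).le (hL i))
    (hdiag i).le, fun i => le_of_eq ?_, ?_⟩
  · have hLi := congr_fun hLfix i
    rw [Pi.add_apply, hA_vecMul] at hLi
    simp only [transpose_apply]
    rw [div_mul_cancel₀ _ (hdiag i).ne', ← hLi, add_comm (ω i)]
  · calc σ ⬝ᵥ (fun i => δ i * L i / G i i) = b ⬝ᵥ L := sum_congr rfl fun i _ => by ring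
      _ ≤ ω ⬝ᵥ p := hLbudget

end SINR

lemma norm_star_dotProduct_comm {n α : Type*} [Fintype n] [NonUnitalNormedRing α] [StarRing α]
    [NormedStarGroup α] (v w : n → α) : ‖star v ⬝ᵥ w‖ = ‖star w ⬝ᵥ v‖ := by
  rw [star_dotProduct, norm_star]

lemma one_div_mul_sum_eq_dotProduct {ι : Type*} [Fintype ι] (m : ℝ) (a p : ι → ℝ) :
    1 / m * ∑ i, a i * p i = a ⬝ᵥ fun i => p i / m := by
  rw [mul_sum]
  exact sum_congr rfl fun i _ => by ring

section AdmissionControl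

variable {ι U : Type*} [Fintype ι] [DecidableEq ι]

/-- The attainable objective values of the admission-control problem. The downlink problem has
`G u i j = |h_iᴴ u_j|²`, `σ = n`, `ω = w`; the uplink problem has the transposed gains and `σ`, `ω`
exchanged. Powers enter the SINR constraints and the budget scaled by `1 / m`. -/
def admissionValues (B : Set U) (G : U → Matrix ι ι ℝ) (γ σ ω : ι → ℝ) (m P : ℝ) : Set ℝ :=
  {s | ∃ (p x : ι → ℝ) (u : U), (∀ i, 0 ≤ p i) ∧ (∀ i, 0 ≤ x i) ∧ u ∈ B ∧
    SINRFeasible (G u) (fun i => γ i / (1 + x i)) σ (fun i => p i / m) ∧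
    1 / m * ∑ i, ω i * p i ≤ P ∧ s = ∑ i, x i}

variable {B : Set U} {G : U → Matrix ι ι ℝ} {γ σ ω : ι → ℝ} {m P : ℝ}

lemma admissionValues_subset_transpose (hm : 0 < m) (hG : ∀ u i j, 0 ≤ G u i j)
    (hγ : ∀ i, 0 < γ i) (hσ : ∀ i, 0 < σ i) (hω : ∀ i, 0 ≤ ω i) :
    admissionValues B G γ σ ω m P ⊆ admissionValues B (fun u => (G u)ᵀ) γ ω σ m P := by
  rintro _ ⟨p, x, u, hp, hx, hu, hfeas, hbudget, rfl⟩
  obtain ⟨q, hq, hqfeas, hqbudget⟩ := hfeas.exists_transpose (hG u)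
    (fun i => div_pos (hγ i) (by linarith [hx i])) hσ hω (fun i => div_nonneg (hp i) hm.le)
  have hrescale : (fun i => m * q i / m) = q := funext fun i => mul_div_cancel_left₀ _ hm.ne'
  refine ⟨fun i => m * q i, x, u, fun i => mul_nonneg hm.le (hq i), hx, hu, ?_, ?_, rfl⟩
  · rwa [hrescale]
  · rw [one_div_mul_sum_eq_dotProduct, hrescale, ← one_div_mul_sum_eq_dotProduct] at *
    exact hqbudget.trans hbudget

lemma admissionValues_transpose (hm : 0 < m) (hG : ∀ u i j, 0 ≤ G u i j)
    (hγ : ∀ i, 0 < γ i) (hσ : ∀ i, 0 < σ i) (hω : ∀ i, 0 < ω i) :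
    admissionValues B (fun u => (G u)ᵀ) γ ω σ m P = admissionValues B G γ σ ω m P := by
  refine (admissionValues_subset_transpose hm hG hγ hσ fun i => (hω i).le).antisymm' ?_
  simpa only [transpose_transpose] using admissionValues_subset_transpose (B := B) (P := P)
    (G := fun u => (G u)ᵀ) hm (fun u i j => hG u j i) hγ hω fun i => (hσ i).le

end AdmissionControl

theorem downlink_uplink_duality_general
    (N M : ℕ) (hM : 0 < M)
    (h : Fin N → (Fin M → ℂ)) (γ n w : Fin N → ℝ) (P : ℝ)
    (hγ : ∀ i, 0 < γ i) (hn : ∀ i, 0 < n i) (hw : ∀ i, 0 < w i) :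
    sInf {s : ℝ | ∃ (p x : Fin N → ℝ) (u : Fin N → (Fin M → ℂ)),
      (∀ i, 0 ≤ p i) ∧ (∀ i, 0 ≤ x i) ∧ (∀ j, ∑ k, ‖u j k‖ ^ 2 = 1) ∧
      (∀ i, (p i / M) * ‖star (h i) ⬝ᵥ u i‖ ^ 2 ≥
        (γ i / (1 + x i)) *
          ((∑ j ∈ Finset.univ.erase i, (p j / M) * ‖star (h i) ⬝ᵥ u j‖ ^ 2) + n i)) ∧
      ((1 / (M : ℝ)) * ∑ i, w i * p i ≤ P) ∧
      s = ∑ i, x i}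
    = sInf {s : ℝ | ∃ (q x : Fin N → ℝ) (u : Fin N → (Fin M → ℂ)),
      (∀ i, 0 ≤ q i) ∧ (∀ i, 0 ≤ x i) ∧ (∀ j, ∑ k, ‖u j k‖ ^ 2 = 1) ∧
      (∀ i, (q i / M) * ‖star (u i) ⬝ᵥ h i‖ ^ 2 ≥
        (γ i / (1 + x i)) *
          ((∑ j ∈ Finset.univ.erase i, (q j / M) * ‖star (u i) ⬝ᵥ h j‖ ^ 2) + w i)) ∧
      ((1 / (M : ℝ)) * ∑ i, n i * q i ≤ P) ∧
      s = ∑ i, x i} := by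
  let B : Set (Fin N → Fin M → ℂ) := {u | ∀ j, ∑ k, ‖u j k‖ ^ 2 = 1}
  let G (u : Fin N → Fin M → ℂ) : Matrix (Fin N) (Fin N) ℝ :=
    of fun i j => ‖star (h i) ⬝ᵥ u j‖ ^ 2
  have hG : ∀ u i j, 0 ≤ G u i j := fun _ _ _ => sq_nonneg _
  have hG_transpose : (fun u => (G u)ᵀ) = fun u => of fun i j => ‖star (u i) ⬝ᵥ h j‖ ^ 2 := by
    ext u i j
    simp only [G, transpose_apply, of_apply]
    rw [norm_star_dotProduct_comm]
  calc _ = sInf (admissionValues B G γ n w M P) := rfl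
    _ = sInf (admissionValues B (fun u => (G u)ᵀ) γ w n M P) := by
      rw [admissionValues_transpose (Nat.cast_pos.mpr hM) hG hγ hn hw]
    _ = _ := by rw [hG_transpose]; rfl

/-- The downlink and the dual uplink admission-control problems have
equal optimal values. -/
theorem downlink_uplink_duality
    (N M : ℕ) (hN : 0 < N) (hM : 0 < M)
    (h : Fin N → (Fin M → ℂ)) (γ n w : Fin N → ℝ) (P : ℝ)
    (hγ : ∀ i, 0 < γ i) (hn : ∀ i, 0 < n i) (hw : ∀ i, 0 < w i) (hP : 0 < P) :
    sInf {s : ℝ | ∃ (p x : Fin N → ℝ) (u : Fin N → (Fin M → ℂ)),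
      (∀ i, 0 ≤ p i) ∧ (∀ i, 0 ≤ x i) ∧ (∀ j, ∑ k, ‖u j k‖ ^ 2 = 1) ∧
      (∀ i, (p i / M) * ‖star (h i) ⬝ᵥ u i‖ ^ 2 ≥
        (γ i / (1 + x i)) *
          ((∑ j ∈ Finset.univ.erase i, (p j / M) * ‖star (h i) ⬝ᵥ u j‖ ^ 2) + n i)) ∧
      ((1 / (M : ℝ)) * ∑ i, w i * p i ≤ P) ∧
      s = ∑ i, x i}
    = sInf {s : ℝ | ∃ (q x : Fin N → ℝ) (u : Fin N → (Fin M → ℂ)),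
      (∀ i, 0 ≤ q i) ∧ (∀ i, 0 ≤ x i) ∧ (∀ j, ∑ k, ‖u j k‖ ^ 2 = 1) ∧
      (∀ i, (q i / M) * ‖star (u i) ⬝ᵥ h i‖ ^ 2 ≥
        (γ i / (1 + x i)) *
          ((∑ j ∈ Finset.univ.erase i, (q j / M) * ‖star (u i) ⬝ᵥ h j‖ ^ 2) + w i)) ∧
      ((1 / (M : ℝ)) * ∑ i, n i * q i ≤ P) ∧
      s = ∑ i, x i} :=
  downlink_uplink_duality_general N M hM h γ n w P hγ hn hw
end

section
/- Uplink-to-downlink power mapping: let G be an N×N real matrix with G_{ij} ≥ 0 for all i,j and G_{ii} > 0 for all i, let γ_i > 0, w_i > 0, n_i > 0, x_i ≥ 0 be reals, and let M > 0. Suppose q ∈ ℝ^N has all entries positive and satisfies, for every i, (1+x_i)G_{ii}q_i/(Mγ_i) = Σ_{j≠i} G_{ji}q_j/M + w_i. Then there exists p ∈ ℝ^N with all entries positive satisfying, for every i, (1+x_i)G_{ii}p_i/(Mγ_i) = Σ_{j≠i} G_{ij}p_j/M + n_i, and moreover Σ_{i=1}^N w_i p_i = Σ_{i=1}^N n_i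 q_i. -/
/-!
The uplink equations read `qᵀ B = w` and the downlink ones `B p = n` for the Z-matrix
`B = D - A`, where `D` is the diagonal of SINR-normalized direct gains and `A` the matrix of
normalized cross gains. The vector `qᵀ B = w > 0` with `q > 0` certifies that `B` is a
nonsingular M-matrix: `B p ≥ 0` forces `p ≥ 0`. So `B` is invertible, the solution of
`B p = n > 0` is positive, and `wᵀ p = qᵀ B p = qᵀ n`.
-/

open Matrix Finset

namespace Matrix

variable {ι 𝕜 : Type*}

def IsZMatrix [Zero 𝕜] [LE 𝕜] (B : Matrix ι ι 𝕜) : Prop :=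
  Pairwise fun i j => B i j ≤ 0

variable [Fintype ι] [DecidableEq ι]

theorem mulVec_apply_eq_add_sum_erase [NonUnitalNonAssocSemiring 𝕜] (B : Matrix ι ι 𝕜)
    (p : ι → 𝕜) (i : ι) : (B *ᵥ p) i = B i i * p i + ∑ j ∈ univ.erase i, B i j * p j :=
  (add_sum_erase _ _ (mem_univ i)).symm

theorem vecMul_apply_eq_add_sum_erase [NonUnitalNonAssocSemiring 𝕜] (B : Matrix ι ι 𝕜)
    (q : ι → 𝕜) (j : ι) : (q ᵥ* B) j = q j * B j j + ∑ i ∈ univ.erase j, q i * B i j :=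
  (add_sum_erase _ (fun i => q i * B i j) (mem_univ j)).symm

namespace IsZMatrix

variable [Field 𝕜] [LinearOrder 𝕜] [IsStrictOrderedRing 𝕜] {B : Matrix ι ι 𝕜}

theorem mulVec_apply_le_diag_mul (hB : B.IsZMatrix) {u : ι → 𝕜} (hu : 0 ≤ u) (i : ι) :
    (B *ᵥ u) i ≤ B i i * u i := by
  rw [mulVec_apply_eq_add_sum_erase, add_le_iff_nonpos_right]
  exact sum_nonpos fun j hj =>
    mul_nonpos_of_nonpos_of_nonneg (hB (ne_of_mem_erase hj).symm) (hu j)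

theorem mulVec_apply_nonpos (hB : B.IsZMatrix) {u : ι → 𝕜} (hu : 0 ≤ u) {i : ι}
    (hi : u i = 0) : (B *ᵥ u) i ≤ 0 := by
  simpa [hi] using hB.mulVec_apply_le_diag_mul hu i

/-- Pairing `qᵀ B > 0` with the negative part `p⁻` gives `(qᵀ B) p⁻ ≥ 0`, while the Z-pattern
makes `B p⁻ ≤ 0` and hence `qᵀ (B p⁻) ≤ 0`; so `p⁻ = 0`. -/
theorem nonneg_of_mulVec_nonneg (hB : B.IsZMatrix) {q : ι → 𝕜} (hq : 0 ≤ q)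
    (hqB : ∀ j, 0 < (q ᵥ* B) j) {p : ι → 𝕜} (hp : 0 ≤ B *ᵥ p) : 0 ≤ p := by
  have hneg : B *ᵥ p⁻ ≤ 0 := by
    intro i
    rcases le_or_gt 0 (p i) with hpi | hpi
    · exact hB.mulVec_apply_nonpos (negPart_nonneg p) (by simp [hpi])
    · have hpos := hB.mulVec_apply_nonpos (posPart_nonneg p) (i := i) (by simp [hpi.le])
      have hsplit : p⁻ = p⁺ - p := by
        linear_combination -(posPart_sub_negPart p)
      rw [hsplit, mulVec_sub, Pi.sub_apply, Pi.zero_apply]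
      linarith [show 0 ≤ (B *ᵥ p) i from hp i]
  have hdot : (q ᵥ* B) ⬝ᵥ p⁻ ≤ 0 := by
    rw [← dotProduct_mulVec]
    exact sum_nonpos fun i _ => mul_nonpos_of_nonneg_of_nonpos (hq i) (hneg i)
  have hterms : ∀ i ∈ univ, 0 ≤ (q ᵥ* B) i * p⁻ i := fun i _ =>
    mul_nonneg (hqB i).le (negPart_nonneg p i)
  intro i
  have hzero := (sum_eq_zero_iff_of_nonneg hterms).1 (le_antisymm hdot (sum_nonneg hterms)) i
    (mem_univ i)
  rw [mul_eq_zero, or_iff_right (hqB i).ne', Pi.negPart_apply, negPart_eq_zero] at hzero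
  exact hzero

theorem mulVec_injective (hB : B.IsZMatrix) {q : ι → 𝕜} (hq : 0 ≤ q)
    (hqB : ∀ j, 0 < (q ᵥ* B) j) : Function.Injective B.mulVec := by
  intro p p' h
  have hle : ∀ {u v : ι → 𝕜}, B *ᵥ u = B *ᵥ v → u ≤ v := fun {u v} huv =>
    sub_nonneg.1 <| hB.nonneg_of_mulVec_nonneg hq hqB (by rw [mulVec_sub, huv, sub_self])
  exact le_antisymm (hle h) (hle h.symm)

theorem exists_pos_mulVec_eq (hB : B.IsZMatrix) {q : ι → 𝕜} (hq : 0 ≤ q)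
    (hqB : ∀ j, 0 < (q ᵥ* B) j) {n : ι → 𝕜} (hn : ∀ i, 0 < n i) :
    ∃ p, (∀ i, 0 < p i) ∧ B *ᵥ p = n := by
  have hunit : IsUnit B := mulVec_injective_iff_isUnit.1 (hB.mulVec_injective hq hqB)
  obtain ⟨p, hBp⟩ := mulVec_surjective_iff_isUnit.2 hunit n
  have hp : 0 ≤ p := hB.nonneg_of_mulVec_nonneg hq hqB (hBp ▸ fun i => (hn i).le)
  refine ⟨p, fun i => (hp i).lt_of_ne fun hpi => ?_, hBp⟩
  have := hB.mulVec_apply_nonpos hp hpi.symm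
  rw [hBp] at this
  exact (hn i).not_ge this

end IsZMatrix

end Matrix

section PowerControl

variable {ι : Type*} [DecidableEq ι]

noncomputable def downlinkMatrix (G : Matrix ι ι ℝ) (γ x : ι → ℝ) (M : ℝ) : Matrix ι ι ℝ :=
  of fun i j => if i = j then (1 + x i) * G i i / (M * γ i) else -(G i j / M)

variable (G : Matrix ι ι ℝ) (γ x : ι → ℝ) (M : ℝ)

theorem downlinkMatrix_isZMatrix (hG : ∀ i j, 0 ≤ G i j) (hM : 0 ≤ M) :
    (downlinkMatrix G γ x M).IsZMatrix := fun i j hij => by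
  simpa [downlinkMatrix, hij] using div_nonneg (hG i j) hM

variable [Fintype ι]

theorem downlinkMatrix_mulVec_apply (p : ι → ℝ) (i : ι) :
    (downlinkMatrix G γ x M *ᵥ p) i =
      (1 + x i) * G i i * p i / (M * γ i) - ∑ j ∈ univ.erase i, G i j * p j / M := by
  rw [mulVec_apply_eq_add_sum_erase, sub_eq_add_neg, ← sum_neg_distrib]
  congr 1
  · simp only [downlinkMatrix, of_apply, if_pos]; ring
  · exact sum_congr rfl fun j hj => by
      simp only [downlinkMatrix, of_apply, if_neg (ne_of_mem_erase hj).symm]; ring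

theorem vecMul_downlinkMatrix_apply (q : ι → ℝ) (j : ι) :
    (q ᵥ* downlinkMatrix G γ x M) j =
      (1 + x j) * G j j * q j / (M * γ j) - ∑ i ∈ univ.erase j, G i j * q i / M := by
  rw [vecMul_apply_eq_add_sum_erase, sub_eq_add_neg, ← sum_neg_distrib]
  congr 1
  · simp only [downlinkMatrix, of_apply, if_pos]; ring
  · exact sum_congr rfl fun i hi => by
      simp only [downlinkMatrix, of_apply, if_neg (ne_of_mem_erase hi)]; ring

end PowerControl

theorem uplink_to_downlink_power_mapping_general
    (N : ℕ) (G : Matrix (Fin N) (Fin N) ℝ)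
    (γ w n x q : Fin N → ℝ) (M : ℝ)
    (hG : ∀ i j, 0 ≤ G i j)
    (hw : ∀ i, 0 < w i) (hn : ∀ i, 0 < n i)
    (hM : 0 < M)
    (hq : ∀ i, 0 < q i)
    (hul : ∀ i, (1 + x i) * G i i * q i / (M * γ i) =
      (∑ j ∈ Finset.univ.erase i, G j i * q j / M) + w i) :
    ∃ p : Fin N → ℝ, (∀ i, 0 < p i) ∧
      (∀ i, (1 + x i) * G i i * p i / (M * γ i) =
        (∑ j ∈ Finset.univ.erase i, G i j * p j / M) + n i) ∧
      (∑ i, w i * p i = ∑ i, n i * q i) := by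
  set B := downlinkMatrix G γ x M
  have hqB : q ᵥ* B = w := funext fun j => by
    rw [vecMul_downlinkMatrix_apply, hul j, add_sub_cancel_left]
  obtain ⟨p, hp, hBp⟩ := (downlinkMatrix_isZMatrix G γ x M hG hM.le).exists_pos_mulVec_eq
    (fun i => (hq i).le) (hqB ▸ hw) hn
  refine ⟨p, hp, fun i => eq_add_of_sub_eq' ?_, ?_⟩
  · rw [← downlinkMatrix_mulVec_apply, hBp]
  · calc ∑ i, w i * p i = q ⬝ᵥ (B *ᵥ p) := by rw [dotProduct_mulVec, hqB]; rfl
      _ = ∑ i, n i * q i := by rw [hBp, dotProduct_comm]; rfl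

/-- Uplink-to-downlink power mapping. -/
theorem uplink_to_downlink_power_mapping
    (N : ℕ) (hN : 0 < N) (G : Matrix (Fin N) (Fin N) ℝ)
    (γ w n x q : Fin N → ℝ) (M : ℝ)
    (hG : ∀ i j, 0 ≤ G i j) (hGd : ∀ i, 0 < G i i)
    (hγ : ∀ i, 0 < γ i) (hw : ∀ i, 0 < w i) (hn : ∀ i, 0 < n i)
    (hx : ∀ i, 0 ≤ x i) (hM : 0 < M)
    (hq : ∀ i, 0 < q i)
    (hul : ∀ i, (1 + x i) * G i i * q i / (M * γ i) =
      (∑ j ∈ Finset.univ.erase i, G j i * q j / M) + w i) :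
    ∃ p : Fin N → ℝ, (∀ i, 0 < p i) ∧
      (∀ i, (1 + x i) * G i i * p i / (M * γ i) =
        (∑ j ∈ Finset.univ.erase i, G i j * p j / M) + n i) ∧
      (∑ i, w i * p i = ∑ i, n i * q i) :=
  uplink_to_downlink_power_mapping_general N G γ w n x q M hG hw hn hM hq hul
end

section
/- Uplink–downlink power conservation: let G ∈ ℝ^{N×N}, and let γ_i, w_i, n_i, x_i, q_i, p_i ∈ ℝ with γ_i ≠ 0, and M > 0. Suppose that for every i, (1+x_i)G_{ii}q_i/(Mγ_i) = Σ_{j≠i} G_{ji}q_j/M + w_i, and for every i, (1+x_i)G_{ii}p_i/(Mγ_i) = Σ_{j≠i} G_{ij}p_j/M + n_i. Then Σ_{i=1}^N w_i p_i = Σ_{i=1}^N n_i q_i; in particular, if (1/M)Σ_{i=1}^N n_i q_i = P then (1/M)Σ_{i=1}^N w_i p_i = P. -/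
open Matrix Finset

/-- Uplink–downlink power conservation. -/
theorem uplink_downlink_power_conservation
    (N : ℕ) (hN : 0 < N) (G : Matrix (Fin N) (Fin N) ℝ)
    (γ w n x q p : Fin N → ℝ) (M P : ℝ)
    (hγ : ∀ i, γ i ≠ 0) (hM : 0 < M)
    (hul : ∀ i, (1 + x i) * G i i * q i / (M * γ i) =
      (∑ j ∈ Finset.univ.erase i, G j i * q j / M) + w i)
    (hdl : ∀ i, (1 + x i) * G i i * p i / (M * γ i) =
      (∑ j ∈ Finset.univ.erase i, G i j * p j / M) + n i) :
    (∑ i, w i * p i = ∑ i, n i * q i) ∧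
    ((1 / M) * ∑ i, n i * q i = P → (1 / M) * ∑ i, w i * p i = P) := by
  have hw : ∀ i, w i = (1 + x i) * G i i * q i / (M * γ i)
      - ((∑ j, G j i * q j / M) - G i i * q i / M) := by
    intro i
    have := hul i
    rw [Finset.sum_erase_eq_sub (Finset.mem_univ i)] at this
    linarith
  have hn : ∀ i, n i = (1 + x i) * G i i * p i / (M * γ i)
      - ((∑ j, G i j * p j / M) - G i i * p i / M) := by
    intro i
    have := hdl i
    rw [Finset.sum_erase_eq_sub (Finset.mem_univ i)] at this
    linarith
  have key : ∑ i, w i * p i = ∑ i, n i * q i := by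
    have h1 : ∑ i, w i * p i =
        (∑ i, ((1 + x i) * G i i * q i / (M * γ i) * p i + G i i * q i / M * p i))
        - ∑ i, ∑ j, G j i * q j / M * p i := by
      rw [← Finset.sum_sub_distrib]
      apply Finset.sum_congr rfl
      intro i _
      rw [hw i, sub_mul, sub_mul, Finset.sum_mul]
      ring
    have h2 : ∑ i, n i * q i =
        (∑ i, ((1 + x i) * G i i * p i / (M * γ i) * q i + G i i * p i / M * q i))
        - ∑ i, ∑ j, G i j * p j / M * q i := by
      rw [← Finset.sum_sub_distrib]
      apply Finset.sum_congr rfl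
      intro i _
      rw [hn i, sub_mul, sub_mul, Finset.sum_mul]
      ring
    rw [h1, h2]
    congr 1
    · apply Finset.sum_congr rfl; intro i _; ring
    · rw [Finset.sum_comm]
      apply Finset.sum_congr rfl; intro i _
      apply Finset.sum_congr rfl; intro j _
      ring
  exact ⟨key, fun hP => by rw [key]; exact hP⟩
end

section
/- Strict spectral radius bound for nonnegative irreducible matrices: let A be an N×N real matrix with nonnegative entries that is irreducible in the sense that for all indices i, j there exists k ≥ 1 with (A^k)_{ij} > 0. Let x ∈ ℝ^N with x ≥ 0 and x ≠ 0, and let c ∈ ℝ. Suppose (A x)_i ≤ c x_i for every i and (A x)_m < c x_m for at least one index m. Then every eigenvalue λ ∈ ℂ of A satisfies |λ| < c. -/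
/-!
Irreducibility makes every nonzero nonnegative `z` with `A z ≤ c z` strictly positive, since
`(A ^ k) j i * z i ≤ (A ^ k z) j ≤ c ^ k * z j`; in particular `x > 0`. If `v` is an eigenvector
for `λ` and `c ≤ |λ|`, then `y = |v|` satisfies `c y ≤ |λ| y ≤ A y`. Let `s x` be the least
multiple of `x` dominating `y`: then `z = s x - y ≥ 0` vanishes somewhere and `A z ≤ c z`, so
`z = 0`, i.e. `y = s x`, which contradicts the strict inequality `(A x)_m < c x_m`.
-/

open Matrix Finset

theorem exists_le_smul_apply_eq {n : Type*} [Fintype n] [Nonempty n] {x : n → ℝ}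
    (hx : ∀ i, 0 < x i) (y : n → ℝ) : ∃ s : ℝ, ∃ i, y ≤ s • x ∧ y i = s * x i := by
  obtain ⟨i, -, hi⟩ := exists_max_image univ (fun i => y i / x i) univ_nonempty
  refine ⟨y i / x i, i, fun j => ?_, (div_mul_cancel₀ _ (hx i).ne').symm⟩
  have := hi j (mem_univ j)
  rw [div_le_iff₀ (hx j)] at this
  simpa using this

namespace Matrix

variable {n : Type*} [Fintype n] {A : Matrix n n ℝ}

theorem mulVec_mono_of_nonneg (hA : ∀ i j, 0 ≤ A i j) {u v : n → ℝ} (huv : u ≤ v) :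
    A *ᵥ u ≤ A *ᵥ v :=
  fun i => sum_le_sum fun j _ => mul_le_mul_of_nonneg_left (huv j) (hA i j)

theorem single_mul_le_mulVec (hA : ∀ i j, 0 ≤ A i j) {z : n → ℝ} (hz : 0 ≤ z) (i j : n) :
    A i j * z j ≤ (A *ᵥ z) i :=
  single_le_sum (f := fun l => A i l * z l) (fun l _ => mul_nonneg (hA i l) (hz l))
    (mem_univ j)

theorem norm_smul_norm_le_mulVec_norm (hA : ∀ i j, 0 ≤ A i j) {μ : ℂ} {v : n → ℂ}
    (hv : A.map Complex.ofReal *ᵥ v = μ • v) : ‖μ‖ • (fun i => ‖v i‖) ≤ A *ᵥ fun i => ‖v i‖ :=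
  fun i =>
  calc ‖μ‖ * ‖v i‖ = ‖(A.map Complex.ofReal *ᵥ v) i‖ := by simp [hv]
    _ ≤ ∑ j, ‖(A i j : ℂ) * v j‖ := norm_sum_le _ _
    _ = (A *ᵥ fun i => ‖v i‖) i := by simp [mulVec, dotProduct, abs_of_nonneg (hA i _)]

variable [DecidableEq n]

theorem pow_mulVec_le_of_mulVec_le (hA : ∀ i j, 0 ≤ A i j) {c : ℝ} (hc : 0 ≤ c) {z : n → ℝ}
    (hz : A *ᵥ z ≤ c • z) (k : ℕ) : A ^ k *ᵥ z ≤ c ^ k • z := by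
  induction k with
  | zero => simp
  | succ k ih =>
    calc A ^ (k + 1) *ᵥ z = A *ᵥ (A ^ k *ᵥ z) := by rw [pow_succ', mulVec_mulVec]
      _ ≤ A *ᵥ (c ^ k • z) := mulVec_mono_of_nonneg hA ih
      _ = c ^ k • (A *ᵥ z) := mulVec_smul A (c ^ k) z
      _ ≤ c ^ k • (c • z) := smul_le_smul_of_nonneg_left hz (pow_nonneg hc k)
      _ = c ^ (k + 1) • z := by rw [smul_smul, pow_succ]

theorem pos_of_mulVec_le_smul (hA : ∀ i j, 0 ≤ A i j) (hirr : ∀ i j, ∃ k, 0 < (A ^ k) i j)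
    {c : ℝ} (hc : 0 ≤ c) {z : n → ℝ} (hz : 0 ≤ z) (hz0 : z ≠ 0) (hAz : A *ᵥ z ≤ c • z) (j : n) :
    0 < z j := by
  obtain ⟨i, hi⟩ := Function.ne_iff.mp hz0
  obtain ⟨k, hk⟩ := hirr j i
  have hApos : 0 < (A ^ k *ᵥ z) j :=
    (mul_pos hk ((hz i).lt_of_ne' hi)).trans_le
      (single_mul_le_mulVec (pow_apply_nonneg hA k) hz j i)
  have hpow : 0 < c ^ k * z j := hApos.trans_le (pow_mulVec_le_of_mulVec_le hA hc hAz k j)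
  exact pos_of_mul_pos_right hpow (pow_nonneg hc k)

theorem exists_eq_smul_of_smul_le_mulVec [Nonempty n] (hA : ∀ i j, 0 ≤ A i j)
    (hirr : ∀ i j, ∃ k, 0 < (A ^ k) i j) {c : ℝ} (hc : 0 ≤ c) {x y : n → ℝ} (hx : ∀ i, 0 < x i)
    (hy : 0 ≤ y) (hAx : A *ᵥ x ≤ c • x) (hAy : c • y ≤ A *ᵥ y) : ∃ s : ℝ, y = s • x := by
  obtain ⟨s, i, hys, hyi⟩ := exists_le_smul_apply_eq hx y
  refine ⟨s, (sub_eq_zero.mp ?_).symm⟩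
  by_contra hz0
  have hs : 0 ≤ s := nonneg_of_mul_nonneg_left (hyi ▸ hy i) (hx i)
  have hAz : A *ᵥ (s • x - y) ≤ c • (s • x - y) := by
    rw [mulVec_sub, mulVec_smul, smul_sub, smul_comm c s x]
    exact sub_le_sub (smul_le_smul_of_nonneg_left hAx hs) hAy
  have := pos_of_mulVec_le_smul hA hirr hc (sub_nonneg.mpr hys) hz0 hAz i
  simp [hyi] at this

theorem not_smul_le_mulVec_of_mulVec_lt (hA : ∀ i j, 0 ≤ A i j)
    (hirr : ∀ i j, ∃ k, 0 < (A ^ k) i j) {c : ℝ} (hc : 0 ≤ c) {x y : n → ℝ} (hx : ∀ i, 0 < x i)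
    (hAx : A *ᵥ x ≤ c • x) {m : n} (hm : (A *ᵥ x) m < c * x m) (hy : 0 ≤ y) (hy0 : y ≠ 0) :
    ¬c • y ≤ A *ᵥ y := by
  intro hAy
  have : Nonempty n := ⟨m⟩
  obtain ⟨s, rfl⟩ := exists_eq_smul_of_smul_le_mulVec hA hirr hc hx hy hAx hAy
  have hs : 0 < s :=
    (nonneg_of_mul_nonneg_left (hy m) (hx m)).lt_of_ne' fun hs => hy0 (by simp [hs])
  have hAym : c * (s * x m) ≤ s * (A *ᵥ x) m := by simpa [mulVec_smul] using hAy m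
  nlinarith [mul_lt_mul_of_pos_left hm hs]

theorem exists_mulVec_eq_smul_of_isRoot_charpoly {K : Type*} [Field K] {B : Matrix n n K} {μ : K}
    (h : B.charpoly.IsRoot μ) : ∃ v ≠ 0, B *ᵥ v = μ • v := by
  have hμ := mem_spectrum_of_isRoot_charpoly h
  rw [← spectrum_toLin', ← Module.End.hasEigenvalue_iff_mem_spectrum] at hμ
  obtain ⟨v, hv⟩ := hμ.exists_hasEigenvector
  exact ⟨v, hv.2, by simpa using hv.apply_eq_smul⟩

end Matrix

theorem spectral_radius_strict_bound_general
    (N : ℕ) (A : Matrix (Fin N) (Fin N) ℝ)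
    (hA : ∀ i j, 0 ≤ A i j)
    (hirr : ∀ i j : Fin N, ∃ k : ℕ, 1 ≤ k ∧ 0 < (A ^ k) i j)
    (x : Fin N → ℝ) (hx : ∀ i, 0 ≤ x i)
    (c : ℝ)
    (hle : ∀ i, (A.mulVec x) i ≤ c * x i)
    (hlt : ∃ m, (A.mulVec x) m < c * x m)
    (lam : ℂ) (hlam : ((A.map (Complex.ofReal)).charpoly).IsRoot lam) :
    ‖lam‖ < c := by
  obtain ⟨m, hm⟩ := hlt
  have hirr' : ∀ i j, ∃ k, 0 < (A ^ k) i j := fun i j => (hirr i j).imp fun _ => And.right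
  have hAx : A *ᵥ x ≤ c • x := fun i => by simpa using hle i
  have hx0 : x ≠ 0 := by rintro rfl; simp at hm
  have hc : 0 ≤ c := by
    have : 0 * x m < c * x m := by
      simpa using (mulVec_mono_of_nonneg hA (u := 0) hx m).trans_lt hm
    exact (lt_of_mul_lt_mul_right this (hx m)).le
  have hxpos := pos_of_mulVec_le_smul hA hirr' hc hx hx0 hAx
  obtain ⟨v, hv0, hv⟩ := exists_mulVec_eq_smul_of_isRoot_charpoly hlam
  have hy : 0 ≤ fun i => ‖v i‖ := fun i => norm_nonneg (v i)
  have hy0 : (fun i => ‖v i‖) ≠ 0 := fun h => hv0 (funext fun i => norm_eq_zero.mp (congrFun h i))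
  by_contra! hcl
  exact not_smul_le_mulVec_of_mulVec_lt hA hirr' hc hxpos hAx hm hy hy0
    ((smul_le_smul_of_nonneg_right hcl hy).trans (norm_smul_norm_le_mulVec_norm hA hv))

/-- Strict spectral radius bound for nonnegative irreducible matrices. -/
theorem spectral_radius_strict_bound
    (N : ℕ) (hN : 0 < N) (A : Matrix (Fin N) (Fin N) ℝ)
    (hA : ∀ i j, 0 ≤ A i j)
    (hirr : ∀ i j : Fin N, ∃ k : ℕ, 1 ≤ k ∧ 0 < (A ^ k) i j)
    (x : Fin N → ℝ) (hx : ∀ i, 0 ≤ x i) (hx0 : x ≠ 0)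
    (c : ℝ)
    (hle : ∀ i, (A.mulVec x) i ≤ c * x i)
    (hlt : ∃ m, (A.mulVec x) m < c * x m)
    (lam : ℂ) (hlam : ((A.map (Complex.ofReal)).charpoly).IsRoot lam) :
    ‖lam‖ < c :=
  spectral_radius_strict_bound_general N A hA hirr x hx c hle hlt lam hlam
end

section
/- Positive solution of a nonnegative linear system forces subunit spectral radius: let B be an N×N real matrix with nonnegative entries and b ∈ ℝ^N with b_i > 0 for all i. If there exists x ∈ ℝ^N with x_i > 0 for all i such that x = Bx + b, then every eigenvalue λ ∈ ℂ of B satisfies |λ| < 1. -/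
/-!
If `v` is a complex eigenvector of `B` for `λ`, scale the positive vector `x` by the least `c`
with `‖v‖ ≤ c x` componentwise; equality holds at some index `i`. There the triangle inequality and
the nonnegativity of `B` give `|λ| c xᵢ = |λ| ‖vᵢ‖ ≤ c (B x)ᵢ = c (xᵢ - bᵢ) < c xᵢ`.
-/

open Matrix Finset

theorem Matrix.exists_mulVec_eq_smul_of_isRoot_charpoly_s9 {K n : Type*} [Field K] [Fintype n]
    [DecidableEq n] {A : Matrix n n K} {μ : K} (h : A.charpoly.IsRoot μ) :
    ∃ v ≠ 0, A *ᵥ v = μ • v := by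
  rw [← mem_spectrum_iff_isRoot_charpoly, ← spectrum_toLin',
    ← Module.End.hasEigenvalue_iff_mem_spectrum] at h
  obtain ⟨v, hv⟩ := h.exists_hasEigenvector
  exact ⟨v, hv.2, by simpa using hv.apply_eq_smul⟩

theorem exists_norm_le_mul_eq_of_ne_zero {ι E : Type*} [Fintype ι] [NormedAddCommGroup E]
    {v : ι → E} (hv : v ≠ 0) {x : ι → ℝ} (hx : ∀ i, 0 < x i) :
    ∃ i, ∃ c > 0, (∀ j, ‖v j‖ ≤ c * x j) ∧ ‖v i‖ = c * x i := by
  obtain ⟨k, hk⟩ := Function.ne_iff.mp hv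
  obtain ⟨i, -, hi⟩ := exists_max_image univ (fun j ↦ ‖v j‖ / x j) ⟨k, mem_univ k⟩
  refine ⟨i, ‖v i‖ / x i, ?_, fun j ↦ (div_le_iff₀ (hx j)).mp (hi j (mem_univ j)),
    (div_mul_cancel₀ _ (hx i).ne').symm⟩
  exact (div_pos (norm_pos_iff.mpr hk) (hx k)).trans_le (hi k (mem_univ k))

theorem Matrix.norm_mul_norm_le_sum_of_mulVec_eq_smul {ι : Type*} [Fintype ι]
    {B : Matrix ι ι ℝ} (hB : ∀ i j, 0 ≤ B i j) {μ : ℂ} {v : ι → ℂ}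
    (hv : B.map Complex.ofReal *ᵥ v = μ • v) (i : ι) :
    ‖μ‖ * ‖v i‖ ≤ ∑ j, B i j * ‖v j‖ := by
  have hvi : μ * v i = ∑ j, (B i j : ℂ) * v j := by
    simpa [mulVec, dotProduct] using (congrFun hv i).symm
  calc ‖μ‖ * ‖v i‖ = ‖∑ j, (B i j : ℂ) * v j‖ := by rw [← norm_mul, hvi]
    _ ≤ ∑ j, ‖(B i j : ℂ) * v j‖ := norm_sum_le _ _
    _ = ∑ j, B i j * ‖v j‖ := by
      simp only [norm_mul, Complex.norm_real, Real.norm_of_nonneg (hB i _)]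

theorem Matrix.norm_lt_of_mulVec_lt_smul {ι : Type*} [Fintype ι] {B : Matrix ι ι ℝ}
    (hB : ∀ i j, 0 ≤ B i j) {x : ι → ℝ} (hx : ∀ i, 0 < x i) {r : ℝ}
    (hBx : ∀ i, (B *ᵥ x) i < r * x i) {μ : ℂ} {v : ι → ℂ} (hv0 : v ≠ 0)
    (hv : B.map Complex.ofReal *ᵥ v = μ • v) :
    ‖μ‖ < r := by
  obtain ⟨i, c, hc, hle, heq⟩ := exists_norm_le_mul_eq_of_ne_zero hv0 hx
  have key : ‖μ‖ * (c * x i) < r * (c * x i) :=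
    calc ‖μ‖ * (c * x i) = ‖μ‖ * ‖v i‖ := by rw [heq]
      _ ≤ ∑ j, B i j * ‖v j‖ := norm_mul_norm_le_sum_of_mulVec_eq_smul hB hv i
      _ ≤ ∑ j, B i j * (c * x j) := by gcongr with j; exacts [hB i j, hle j]
      _ = c * (B *ᵥ x) i := by simp only [mulVec, dotProduct, mul_sum, mul_left_comm]
      _ < c * (r * x i) := mul_lt_mul_of_pos_left (hBx i) hc
      _ = r * (c * x i) := mul_left_comm _ _ _
  exact lt_of_mul_lt_mul_right key (mul_pos hc (hx i)).le

theorem positive_solution_subunit_spectral_radius_general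
    (N : ℕ) (B : Matrix (Fin N) (Fin N) ℝ)
    (hB : ∀ i j, 0 ≤ B i j)
    (b : Fin N → ℝ) (hb : ∀ i, 0 < b i)
    (x : Fin N → ℝ) (hx : ∀ i, 0 < x i)
    (hsol : x = B.mulVec x + b)
    (lam : ℂ) (hlam : ((B.map (Complex.ofReal)).charpoly).IsRoot lam) :
    ‖lam‖ < 1 := by
  obtain ⟨v, hv0, hv⟩ := exists_mulVec_eq_smul_of_isRoot_charpoly_s9 hlam
  refine norm_lt_of_mulVec_lt_smul hB hx (fun i ↦ ?_) hv0 hv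
  have hxi := congrFun hsol i
  simp only [Pi.add_apply] at hxi
  linarith [hb i]

/-- Positive solution of a nonnegative linear system forces
subunit spectral radius. -/
theorem positive_solution_subunit_spectral_radius
    (N : ℕ) (hN : 0 < N) (B : Matrix (Fin N) (Fin N) ℝ)
    (hB : ∀ i j, 0 ≤ B i j)
    (b : Fin N → ℝ) (hb : ∀ i, 0 < b i)
    (x : Fin N → ℝ) (hx : ∀ i, 0 < x i)
    (hsol : x = B.mulVec x + b)
    (lam : ℂ) (hlam : ((B.map (Complex.ofReal)).charpoly).IsRoot lam) :
    ‖lam‖ < 1 :=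
  positive_solution_subunit_spectral_radius_general N B hB b hb x hx hsol lam hlam
end

section
/- Rank-one perturbation lemma: let z < 0 be real, let B ∈ ℂ^{M×M} be Hermitian positive semidefinite, let x ∈ ℂ^M, and let A ∈ ℂ^{M×M}. Then both B − zI and B + x x^H − zI are invertible and |(1/M)·tr(((B − zI)^{-1} − (B + x x^H − zI)^{-1})·A)| ≤ ‖A‖/(M·|z|), where ‖A‖ denotes the operator norm of A with respect to the Euclidean norm on ℂ^M. -/
open Matrix ComplexOrder

/-!
Put `E = B - zI` and `u = E⁻¹x`. By the Sherman–Morrison formula the trace equals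
`uᴴAu / (1 + xᴴE⁻¹x)`. Since `E ≥ |z| I`, the real number `xᴴE⁻¹x = uᴴEu` is at least `|z|‖u‖²`,
while `|uᴴAu| ≤ ‖A‖‖u‖²`; hence the trace is at most `‖A‖‖u‖² / (1 + |z|‖u‖²) ≤ ‖A‖ / |z|`.
-/

namespace Matrix

variable {n : Type*}

section ShermanMorrison

variable [Fintype n] [DecidableEq n] {K : Type*} [Field K]

theorem inv_add_vecMulVec {E : Matrix n n K} (hE : IsUnit E) {x y : n → K}
    (h : 1 + y ⬝ᵥ (E⁻¹ *ᵥ x) ≠ 0) :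
    (E + vecMulVec x y)⁻¹ =
      E⁻¹ - (1 + y ⬝ᵥ (E⁻¹ *ᵥ x))⁻¹ • vecMulVec (E⁻¹ *ᵥ x) (y ᵥ* E⁻¹) := by
  have hEE : E * E⁻¹ = 1 := mul_nonsing_inv E ((isUnit_iff_isUnit_det E).mp hE)
  apply inv_eq_right_inv
  rw [mul_sub, add_mul, add_mul, hEE, mul_smul_comm, mul_smul_comm, mul_vecMulVec, mulVec_mulVec,
    hEE, one_mulVec, vecMulVec_mul, vecMulVec_mul_vecMulVec, vecMulVec_smul, smul_smul,
    ← add_smul, ← mul_one_add, inv_mul_cancel₀ h, one_smul, add_sub_cancel_right]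

theorem trace_inv_sub_inv_add_vecMulVec_mul {E : Matrix n n K} (hE : IsUnit E) {x y : n → K}
    (h : 1 + y ⬝ᵥ (E⁻¹ *ᵥ x) ≠ 0) (A : Matrix n n K) :
    trace ((E⁻¹ - (E + vecMulVec x y)⁻¹) * A) =
      (1 + y ⬝ᵥ (E⁻¹ *ᵥ x))⁻¹ * ((y ᵥ* E⁻¹) ⬝ᵥ (A *ᵥ (E⁻¹ *ᵥ x))) := by
  rw [inv_add_vecMulVec hE h, sub_sub_cancel, smul_mul_assoc, trace_smul, vecMulVec_mul,
    trace_vecMulVec, smul_eq_mul, dotProduct_mulVec (y ᵥ* E⁻¹) A, dotProduct_comm (E⁻¹ *ᵥ x)]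

end ShermanMorrison

variable {𝕜 : Type*} [RCLike 𝕜]

theorem posDef_of_posSemidef_sub_smul_one [DecidableEq n] {E : Matrix n n 𝕜} {c : ℝ}
    (hE : (E - (c : 𝕜) • 1).PosSemidef) (hc : 0 < c) : E.PosDef := by
  simpa using PosDef.posSemidef_add hE
    ((PosDef.one (n := n) (R := 𝕜)).smul ((RCLike.ofReal_pos (K := 𝕜)).mpr hc))

theorem star_dotProduct_self_eq_norm_sq [Fintype n] (u : n → 𝕜) :
    star u ⬝ᵥ u = (‖(WithLp.toLp 2 u : EuclideanSpace 𝕜 n)‖ ^ 2 : 𝕜) := by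
  rw [← inner_self_eq_norm_sq_to_K, EuclideanSpace.inner_toLp_toLp, dotProduct_comm]

theorem norm_star_dotProduct_mulVec_le [Fintype n] [DecidableEq n] (A : Matrix n n 𝕜) (u : n → 𝕜) :
    ‖star u ⬝ᵥ (A *ᵥ u)‖ ≤
      ‖toEuclideanCLM (𝕜 := 𝕜) A‖ * ‖(WithLp.toLp 2 u : EuclideanSpace 𝕜 n)‖ ^ 2 := by
  set v : EuclideanSpace 𝕜 n := WithLp.toLp 2 u
  calc ‖star u ⬝ᵥ (A *ᵥ u)‖ = ‖inner 𝕜 v (toEuclideanCLM (𝕜 := 𝕜) A v)‖ := by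
        rw [toEuclideanCLM_toLp, EuclideanSpace.inner_toLp_toLp, dotProduct_comm]
    _ ≤ ‖v‖ * ‖toEuclideanCLM (𝕜 := 𝕜) A v‖ := norm_inner_le_norm _ _
    _ ≤ ‖v‖ * (‖toEuclideanCLM (𝕜 := 𝕜) A‖ * ‖v‖) := by
        gcongr; exact ContinuousLinearMap.le_opNorm _ _
    _ = _ := by ring

theorem PosSemidef.smul_norm_sq_le_star_dotProduct_mulVec [Fintype n] [DecidableEq n]
    {E : Matrix n n 𝕜} {c : ℝ} (hE : (E - (c : 𝕜) • 1).PosSemidef) (u : n → 𝕜) :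
    ((c * ‖(WithLp.toLp 2 u : EuclideanSpace 𝕜 n)‖ ^ 2 : ℝ) : 𝕜) ≤ star u ⬝ᵥ (E *ᵥ u) := by
  have := hE.dotProduct_mulVec_nonneg u
  rwa [sub_mulVec, dotProduct_sub, smul_mulVec, one_mulVec, dotProduct_smul,
    star_dotProduct_self_eq_norm_sq, sub_nonneg, smul_eq_mul, ← RCLike.ofReal_pow,
    ← RCLike.ofReal_mul] at this

theorem norm_trace_inv_sub_inv_add_vecMulVec_mul_le [Fintype n] [DecidableEq n]
    {E : Matrix n n 𝕜} {c : ℝ} (hE : (E - (c : 𝕜) • 1).PosSemidef) (hc : 0 < c)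
    (x : n → 𝕜) (A : Matrix n n 𝕜) :
    ‖trace ((E⁻¹ - (E + vecMulVec x (star x))⁻¹) * A)‖ ≤ ‖toEuclideanCLM (𝕜 := 𝕜) A‖ / c := by
  have hEpd := posDef_of_posSemidef_sub_smul_one hE hc
  have hEinv : E * E⁻¹ = 1 := mul_nonsing_inv E ((isUnit_iff_isUnit_det E).mp hEpd.isUnit)
  set u := E⁻¹ *ᵥ x
  set s := ‖(WithLp.toLp 2 u : EuclideanSpace 𝕜 n)‖ ^ 2
  have hxu : x = E *ᵥ u := by rw [mulVec_mulVec, hEinv, one_mulVec]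
  have hux : star x ᵥ* E⁻¹ = star u := by rw [star_mulVec, hEpd.isHermitian.inv.eq]
  obtain ⟨r, hr, ht⟩ : ∃ r ≥ (0 : ℝ), (r : 𝕜) = star x ⬝ᵥ u - ((c * s : ℝ) : 𝕜) := by
    have htu : star x ⬝ᵥ u = star u ⬝ᵥ (E *ᵥ u) := by
      rw [← hux, ← hxu, ← dotProduct_mulVec]
    rw [← RCLike.nonneg_iff_exists_ofReal, sub_nonneg, htu]
    exact hE.smul_norm_sq_le_star_dotProduct_mulVec u
  have ht' : star x ⬝ᵥ u = ((1 + c * s + r : ℝ) : 𝕜) - 1 := by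
    push_cast at ht ⊢
    linear_combination -ht
  have hpos : 0 < 1 + c * s + r := by positivity
  rw [trace_inv_sub_inv_add_vecMulVec_mul hEpd.isUnit (by
      rw [show star x ⬝ᵥ (E⁻¹ *ᵥ x) = _ from ht', add_sub_cancel]
      exact RCLike.ofReal_ne_zero.mpr hpos.ne'), hux, ht',
    add_sub_cancel, norm_mul, norm_inv, RCLike.norm_ofReal, abs_of_pos hpos]
  calc (1 + c * s + r)⁻¹ * ‖star u ⬝ᵥ (A *ᵥ u)‖
      ≤ (1 + c * s + r)⁻¹ * (‖toEuclideanCLM (𝕜 := 𝕜) A‖ * s) := by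
        gcongr; exact norm_star_dotProduct_mulVec_le A u
    _ ≤ ‖toEuclideanCLM (𝕜 := 𝕜) A‖ / c := by
        rw [inv_mul_le_iff₀ hpos, mul_div_assoc', le_div_iff₀ hc]
        nlinarith [norm_nonneg (toEuclideanCLM (𝕜 := 𝕜) A)]

end Matrix

theorem rank_one_perturbation_lemma_general
    (M : ℕ) (z : ℝ) (hz : z < 0)
    (B : Matrix (Fin M) (Fin M) ℂ) (hB : B.PosSemidef)
    (x : Fin M → ℂ) (A : Matrix (Fin M) (Fin M) ℂ) :
    IsUnit (B - (z : ℂ) • 1) ∧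
    IsUnit (B + Matrix.vecMulVec x (star x) - (z : ℂ) • 1) ∧
    ‖(1 / (M : ℂ)) * Matrix.trace
        (((B - (z : ℂ) • 1)⁻¹ - (B + Matrix.vecMulVec x (star x) - (z : ℂ) • 1)⁻¹) * A)‖
      ≤ ‖Matrix.toEuclideanCLM (𝕜 := ℂ) A‖ / (M * |z|) := by
  have hz' : 0 < -z := neg_pos.mpr hz
  have hE : (B - (z : ℂ) • 1 - ((-z : ℝ) : ℂ) • 1).PosSemidef := by simpa using hB
  have hEx : (B + vecMulVec x (star x) - (z : ℂ) • 1 - ((-z : ℝ) : ℂ) • 1).PosSemidef := by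
    simpa using hB.add (posSemidef_vecMulVec_self_star x)
  have hperturb :
      B + vecMulVec x (star x) - (z : ℂ) • 1 = B - (z : ℂ) • 1 + vecMulVec x (star x) :=
    (sub_add_eq_add_sub ..).symm
  refine ⟨(posDef_of_posSemidef_sub_smul_one hE hz').isUnit,
    (posDef_of_posSemidef_sub_smul_one hEx hz').isUnit, ?_⟩
  rw [hperturb, norm_mul, one_div, norm_inv, Complex.norm_natCast, abs_of_neg hz,
    mul_comm (M : ℝ), ← div_div, div_eq_inv_mul _ (M : ℝ)]
  gcongr
  exact norm_trace_inv_sub_inv_add_vecMulVec_mul_le hE hz' x A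

/-- Rank-one perturbation lemma. -/
theorem rank_one_perturbation_lemma
    (M : ℕ) (hM : 0 < M) (z : ℝ) (hz : z < 0)
    (B : Matrix (Fin M) (Fin M) ℂ) (hB : B.PosSemidef)
    (x : Fin M → ℂ) (A : Matrix (Fin M) (Fin M) ℂ) :
    IsUnit (B - (z : ℂ) • 1) ∧
    IsUnit (B + Matrix.vecMulVec x (star x) - (z : ℂ) • 1) ∧
    ‖(1 / (M : ℂ)) * Matrix.trace
        (((B - (z : ℂ) • 1)⁻¹ - (B + Matrix.vecMulVec x (star x) - (z : ℂ) • 1)⁻¹) * A)‖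
      ≤ ‖Matrix.toEuclideanCLM (𝕜 := ℂ) A‖ / (M * |z|) :=
  rank_one_perturbation_lemma_general M z hz B hB x A
end

section
/- Existence and uniqueness of the deterministic-equivalent fixed point: let w > 0 and M > 0 be reals and let a_1, …, a_N be nonnegative reals. Then there exists a unique φ > 0 satisfying φ = (w + (1/M)·Σ_{j=1}^N a_j/(1 + a_j φ))^{-1}. -/
/-- Existence and uniqueness of the deterministic-equivalent
fixed point. -/
theorem deterministic_equivalent_fixed_point
    (N : ℕ) (w M : ℝ) (hw : 0 < w) (hM : 0 < M)
    (a : Fin N → ℝ) (ha : ∀ j, 0 ≤ a j) :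
    ∃! φ : ℝ, 0 < φ ∧ φ = (w + (1 / M) * ∑ j, a j / (1 + a j * φ))⁻¹ := by
  set F : ℝ → ℝ := fun φ => w + (1 / M) * ∑ j, a j / (1 + a j * φ) with hF
  set G : ℝ → ℝ := fun φ => φ * F φ with hG
  have hden : ∀ (φ : ℝ), 0 ≤ φ → ∀ j, 0 < 1 + a j * φ := by
    intro φ hφ j
    nlinarith [mul_nonneg (ha j) hφ]
  have hsumnn : ∀ (φ : ℝ), 0 ≤ φ → 0 ≤ ∑ j, a j / (1 + a j * φ) := by
    intro φ hφ
    exact Finset.sum_nonneg fun j _ => div_nonneg (ha j) (hden φ hφ j).le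
  have hFpos : ∀ (φ : ℝ), 0 ≤ φ → 0 < F φ := by
    intro φ hφ
    have h1 : 0 ≤ (1 / M) * ∑ j, a j / (1 + a j * φ) :=
      mul_nonneg (by positivity) (hsumnn φ hφ)
    simp only [hF]
    linarith
  -- strict monotonicity of G on [0, ∞)
  have hGmono : StrictMonoOn G (Set.Ici (0 : ℝ)) := by
    intro x hx y hy hxy
    simp only [Set.mem_Ici] at hx hy
    have hsum : ∀ j : Fin N,
        x * (a j / (1 + a j * x)) ≤ y * (a j / (1 + a j * y)) := by
      intro j
      rw [mul_div_assoc' x, mul_div_assoc' y]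
      rw [div_le_div_iff₀ (hden x hx j) (hden y hy j)]
      have := ha j
      nlinarith [mul_nonneg (mul_nonneg this this) (mul_nonneg hx hy)]
    have hsum' : ∑ j, x * (a j / (1 + a j * x)) ≤
        ∑ j, y * (a j / (1 + a j * y)) :=
      Finset.sum_le_sum fun j _ => hsum j
    have hGx : ∀ (z : ℝ), G z = z * w + (1 / M) * ∑ j, z * (a j / (1 + a j * z)) := by
      intro z
      have hzs : z * ((1 / M) * ∑ j, a j / (1 + a j * z)) =
          (1 / M) * ∑ j, z * (a j / (1 + a j * z)) := by
        rw [Finset.mul_sum, Finset.mul_sum, Finset.mul_sum]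
        apply Finset.sum_congr rfl
        intro j _
        ring
      simp only [hG, hF, mul_add, hzs]
    rw [hGx, hGx]
    have h1 : x * w < y * w := by nlinarith
    have h2 : (1 / M) * ∑ j, x * (a j / (1 + a j * x)) ≤
        (1 / M) * ∑ j, y * (a j / (1 + a j * y)) :=
      mul_le_mul_of_nonneg_left hsum' (by positivity)
    linarith
  -- continuity of G on [0, 1/w]
  have hGcont : ContinuousOn G (Set.Icc (0 : ℝ) (1 / w)) := by
    apply ContinuousOn.mul continuousOn_id
    apply ContinuousOn.add continuousOn_const
    apply ContinuousOn.mul continuousOn_const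
    apply continuousOn_finset_sum
    intro j _
    apply ContinuousOn.div continuousOn_const
    · exact (continuous_const.add (continuous_const.mul continuous_id)).continuousOn
    · intro z hz
      exact (hden z hz.1 j).ne'
  -- IVT: G 0 = 0, G (1/w) ≥ 1
  have hG0 : G 0 = 0 := by simp [hG]
  have hG1w : 1 ≤ G (1 / w) := by
    have hnn := hsumnn (1 / w) (by positivity)
    have h1 : 0 ≤ (1 / M) * ∑ j, a j / (1 + a j * (1 / w)) :=
      mul_nonneg (by positivity) hnn
    have : G (1 / w) = 1 + (1 / w) * ((1 / M) * ∑ j, a j / (1 + a j * (1 / w))) := by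
      simp only [hG, hF]
      field_simp
    rw [this]
    nlinarith [mul_nonneg (le_of_lt (show (0:ℝ) < 1 / w by positivity)) h1]
  have hmem : (1 : ℝ) ∈ Set.Icc (G 0) (G (1 / w)) :=
    ⟨by rw [hG0]; norm_num, hG1w⟩
  obtain ⟨φ, hφmem, hφeq⟩ := intermediate_value_Icc (by positivity : (0:ℝ) ≤ 1 / w) hGcont hmem
  have hφpos : 0 < φ := by
    rcases lt_or_eq_of_le hφmem.1 with h | h
    · exact h
    · exfalso; rw [← h] at hφeq; rw [hG0] at hφeq; norm_num at hφeq
  -- the fixed-point characterization: 0 < ψ ∧ ψ = (F ψ)⁻¹ ↔ 0 < ψ ∧ G ψ = 1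
  have hchar : ∀ ψ : ℝ, 0 < ψ → (ψ = (F ψ)⁻¹ ↔ G ψ = 1) := by
    intro ψ hψ
    constructor
    · intro h
      have h1 : ψ * F ψ = (F ψ)⁻¹ * F ψ := by rw [← h]
      simp only [hG]
      rw [h1, inv_mul_cancel₀ (hFpos ψ hψ.le).ne']
    · intro h
      exact eq_inv_of_mul_eq_one_left h
  refine ⟨φ, ⟨hφpos, (hchar φ hφpos).mpr hφeq⟩, ?_⟩
  intro ψ ⟨hψpos, hψeq⟩
  have hψG : G ψ = 1 := (hchar ψ hψpos).mp hψeq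
  exact hGmono.injOn (Set.mem_Ici.mpr hψpos.le) (Set.mem_Ici.mpr hφpos.le)
    (by rw [hψG, hφeq])
end

section
/- Local convergence of the averaged fixed-point iteration (Theorem 2): let N ≥ 2, let F ∈ ℝ^{N×N} have zero diagonal and strictly positive off-diagonal entries, let ω, n ∈ ℝ^N have strictly positive entries, and let c > 0. Define T on pairs of positive vectors (q, y) ∈ ℝ^N_{>0} × ℝ^N_{>0} by T(q, y) = (f₁(q,y), f₂(q,y)) where f₁(q,y)_i = ((F^T q)_i + ω_i)/(q_i y_i) and f₂(q,y)_i = (F q^{-1})_i + (1/c)·n_i·(ω^T q^{-1}), with q^{-1} the entrywise inverse of q. Suppose z⋆ = (q⋆, y⋆) with all entries positive is a fixed point of T. Then there exists ε > 0 such that for every initial point z₀ with ‖z₀ − z⋆‖ < ε, the sequence defined by z_{k+1} = ½(z_k + T(z_k)) converges to z⋆. -/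
open Matrix Finset Filter Topology NNReal

/-!
Near a fixed point `z⋆ = (q⋆, y⋆)` the damped map `g z = ½ (z + T z)` is governed by its Jacobian
`J` at `z⋆`. Measure the `q`-coordinates in units of `q⋆` and the `y`-coordinates in units of
`s = y⋆ + ω / (2 q⋆²)`. The fixed-point equations turn the absolute row sums of `J` in these units
into `1 - ω / (4 q⋆² y⋆)` for the `q`-rows and `(y⋆ + s) / (2 s)` for the `y`-rows, both `< 1`.
So `J` is a strict contraction for this weighted sup norm, `g` is a contraction on a small ball
around `z⋆`, and its iterates converge to `z⋆`.
-/

section LocalAttraction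

theorem LipschitzOnWith.tendsto_iterate_of_mem_closedBall {X : Type*} [PseudoMetricSpace X]
    {f : X → X} {x y : X} {K : ℝ≥0} {r : ℝ} (hf : LipschitzOnWith K f (Metric.closedBall x r))
    (hK : K < 1) (hfx : f x = x) (hy : y ∈ Metric.closedBall x r) :
    Tendsto (fun k => f^[k] y) atTop (𝓝 x) := by
  have hx : x ∈ Metric.closedBall x r := Metric.mem_closedBall_self (dist_nonneg.trans hy)
  have hdist : ∀ k, dist (f^[k] y) x ≤ K ^ k * dist y x := by
    intro k
    induction k with
    | zero => simp
    | succ k ih =>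
      have hmem : f^[k] y ∈ Metric.closedBall x r :=
        ih.trans ((mul_le_of_le_one_left dist_nonneg (pow_le_one₀ K.2 hK.le)).trans hy)
      calc dist (f^[k + 1] y) x = dist (f (f^[k] y)) (f x) := by
            rw [Function.iterate_succ_apply', hfx]
        _ ≤ K * dist (f^[k] y) x := hf.dist_le_mul _ hmem _ hx
        _ ≤ K * (K ^ k * dist y x) := by gcongr
        _ = K ^ (k + 1) * dist y x := by ring
  have hgeom : Tendsto (fun k => (K : ℝ) ^ k * dist y x) atTop (𝓝 0) := by
    simpa using (tendsto_pow_atTop_nhds_zero_of_lt_one K.2 hK).mul_const (dist y x)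
  exact tendsto_iff_dist_tendsto_zero.2 (squeeze_zero (fun _ => dist_nonneg) hdist hgeom)

variable {𝕜 E F : Type*} [NontriviallyNormedField 𝕜] [NormedAddCommGroup E] [NormedSpace 𝕜 E]
  [NormedAddCommGroup F] [NormedSpace 𝕜 F]

theorem HasStrictFDerivAt.eventually_tendsto_iterate {f : E → E} {f' : E →L[𝕜] E} {x : E}
    (hf : HasStrictFDerivAt f f' x) (hfx : f x = x) (hf' : ‖f'‖ < 1) :
    ∀ᶠ y in 𝓝 x, Tendsto (fun k => f^[k] y) atTop (𝓝 x) := by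
  obtain ⟨K, hf'K, hK⟩ := exists_between (show ‖f'‖₊ < 1 from hf')
  obtain ⟨U, hU, hlip⟩ := hf.exists_lipschitzOnWith_of_nnnorm_lt K hf'K
  obtain ⟨r, hr, hrU⟩ := Metric.nhds_basis_closedBall.mem_iff.1 hU
  filter_upwards [Metric.closedBall_mem_nhds x hr] with y hy
  exact (hlip.mono hrU).tendsto_iterate_of_mem_closedBall hK hfx hy

theorem HasStrictFDerivAt.eventually_tendsto_iterate_of_conj {f : E → E} {f' : E →L[𝕜] E}
    {x : E} (e : F ≃L[𝕜] E) (hf : HasStrictFDerivAt f f' x) (hfx : f x = x)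
    (hf' : ‖(e.symm : E →L[𝕜] F) ∘L f' ∘L (e : F →L[𝕜] E)‖ < 1) :
    ∀ᶠ y in 𝓝 x, Tendsto (fun k => f^[k] y) atTop (𝓝 x) := by
  set g : F → F := e.symm ∘ f ∘ e
  have hg : HasStrictFDerivAt g ((e.symm : E →L[𝕜] F) ∘L f' ∘L (e : F →L[𝕜] E)) (e.symm x) :=
    e.symm.hasStrictFDerivAt.comp _ <|
      (by rwa [e.apply_symm_apply] : HasStrictFDerivAt f f' (e (e.symm x))).comp _
        e.hasStrictFDerivAt
  have hgx : g (e.symm x) = e.symm x := by simp [g, hfx]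
  have hconj : ∀ k y, f^[k] y = e (g^[k] (e.symm y)) := fun k y => by
    have : Function.Semiconj e g f := fun w => by simp [g]
    rw [this.iterate_right k, e.apply_symm_apply]
  filter_upwards [e.symm.continuous.continuousAt.eventually (hg.eventually_tendsto_iterate hgx hf')]
    with y hy
  simpa only [hconj, Function.comp_def, e.apply_symm_apply] using (e.continuous.tendsto _).comp hy

end LocalAttraction

section WeightedSupNorm

theorem abs_sum_mul_le_sum_mul {ι : Type*} [Fintype ι] {a x y : ι → ℝ} (ha : ∀ j, 0 ≤ a j)
    (hx : ∀ j, |x j| ≤ y j) : |∑ j, a j * x j| ≤ ∑ j, a j * y j :=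
  (abs_sum_le_sum_abs _ _).trans <| sum_le_sum fun j _ => by
    rw [abs_mul, abs_of_nonneg (ha j)]
    exact mul_le_mul_of_nonneg_left (hx j) (ha j)

theorem exists_nonneg_lt_one_forall_le {ι : Type*} [Finite ι] {ρ : ι → ℝ} (hρ : ∀ i, ρ i < 1) :
    ∃ κ < 1, 0 ≤ κ ∧ ∀ i, ρ i ≤ κ := by
  obtain ⟨κ, hρκ, hκ⟩ := ((eventually_all.2 fun i => Ioo_mem_nhdsLT (hρ i)).and
    (Ioo_mem_nhdsLT one_pos)).exists
  exact ⟨κ, hκ.2, hκ.1.le, fun i => (hρκ i).1.le⟩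

noncomputable def diagScale {ι : Type*} (u v : ι → ℝˣ) :
    ((ι → ℝ) × (ι → ℝ)) ≃L[ℝ] (ι → ℝ) × (ι → ℝ) :=
  (ContinuousLinearEquiv.piCongrRight fun i => .smulLeft (u i)).prodCongr
    (ContinuousLinearEquiv.piCongrRight fun i => .smulLeft (v i))

theorem diagScale_apply {ι : Type*} (u v : ι → ℝˣ) (w : (ι → ℝ) × (ι → ℝ)) :
    diagScale u v w = (fun i => u i * w.1 i, fun i => v i * w.2 i) := rfl

theorem diagScale_symm_apply {ι : Type*} (u v : ι → ℝˣ) (w : (ι → ℝ) × (ι → ℝ)) :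
    (diagScale u v).symm w = (fun i => ↑(u i)⁻¹ * w.1 i, fun i => ↑(v i)⁻¹ * w.2 i) := by
  rw [ContinuousLinearEquiv.symm_apply_eq, diagScale_apply]
  ext i <;> simp

theorem norm_conj_diagScale_le {ι : Type*} [Fintype ι]
    (L : ((ι → ℝ) × (ι → ℝ)) →L[ℝ] (ι → ℝ) × (ι → ℝ)) (u v : ι → ℝˣ) {κ : ℝ} (hκ : 0 ≤ κ)
    (hL : ∀ w t, (∀ j, |w.1 j| ≤ t * |(u j : ℝ)|) → (∀ j, |w.2 j| ≤ t * |(v j : ℝ)|) →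
      ∀ i, |(L w).1 i| ≤ κ * (t * |(u i : ℝ)|) ∧ |(L w).2 i| ≤ κ * (t * |(v i : ℝ)|)) :
    ‖((diagScale u v).symm : ((ι → ℝ) × (ι → ℝ)) →L[ℝ] (ι → ℝ) × (ι → ℝ)) ∘L L ∘L
      (diagScale u v : ((ι → ℝ) × (ι → ℝ)) →L[ℝ] (ι → ℝ) × (ι → ℝ))‖ ≤ κ := by
  refine ContinuousLinearMap.opNorm_le_bound _ hκ fun w => ?_
  have hbound := hL (diagScale u v w) ‖w‖
    (fun j => by
      rw [diagScale_apply, abs_mul, mul_comm]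
      exact mul_le_mul_of_nonneg_right ((norm_le_pi_norm w.1 j).trans (norm_fst_le w))
        (abs_nonneg _))
    (fun j => by
      rw [diagScale_apply, abs_mul, mul_comm]
      exact mul_le_mul_of_nonneg_right ((norm_le_pi_norm w.2 j).trans (norm_snd_le w))
        (abs_nonneg _))
  have hκw : 0 ≤ κ * ‖w‖ := by positivity
  simp only [ContinuousLinearMap.comp_apply, ContinuousLinearEquiv.coe_coe, diagScale_symm_apply,
    Prod.norm_def]
  refine max_le ((pi_norm_le_iff_of_nonneg hκw).2 fun i => ?_)
    ((pi_norm_le_iff_of_nonneg hκw).2 fun i => ?_)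
  · rw [Real.norm_eq_abs, abs_mul, Units.val_inv_eq_inv_val, abs_inv, inv_mul_le_iff₀ (by simp),
      mul_comm |_|, mul_assoc]
    exact (hbound i).1
  · rw [Real.norm_eq_abs, abs_mul, Units.val_inv_eq_inv_val, abs_inv, inv_mul_le_iff₀ (by simp),
      mul_comm |_|, mul_assoc]
    exact (hbound i).2

end WeightedSupNorm

section PrimalDual

variable {ι : Type*} [Fintype ι] (F : Matrix ι ι ℝ) (ω n : ι → ℝ) (c : ℝ)

noncomputable def primalDualMap (z : (ι → ℝ) × (ι → ℝ)) : (ι → ℝ) × (ι → ℝ) :=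
  (fun i => ((F.transpose.mulVec z.1) i + ω i) / (z.1 i * z.2 i),
   fun i => (F.mulVec (fun j => (z.1 j)⁻¹)) i + (1 / c) * n i * (∑ j, ω j * (z.1 j)⁻¹))

noncomputable def primalDualDeriv (z : (ι → ℝ) × (ι → ℝ)) :
    ((ι → ℝ) × (ι → ℝ)) →L[ℝ] (ι → ℝ) × (ι → ℝ) :=
  LinearMap.toContinuousLinearMap
    { toFun := fun w =>
        (fun i => ((Fᵀ *ᵥ w.1) i - (primalDualMap F ω n c z).1 i * (z.2 i * w.1 i + z.1 i * w.2 i))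
            / (z.1 i * z.2 i),
         fun i => -∑ j, (F i j + 1 / c * n i * ω j) / z.1 j ^ 2 * w.1 j)
      map_add' := fun w w' => by
        ext i <;> simp only [Prod.fst_add, Prod.snd_add, Prod.mk_add_mk, Pi.add_apply, mulVec_add,
          mul_add, add_div, sum_add_distrib, neg_add_rev] <;> ring
      map_smul' := fun a w => by
        ext i <;> simp only [Prod.smul_fst, Prod.smul_snd, Prod.smul_mk, Pi.smul_apply, smul_eq_mul,
          mulVec_smul, Real.ringHom_apply, mul_neg, mul_sum, neg_inj]
        · ring
        · exact sum_congr rfl fun j _ => by ring }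

noncomputable def averagedPrimalDualDeriv (z : (ι → ℝ) × (ι → ℝ)) :
    ((ι → ℝ) × (ι → ℝ)) →L[ℝ] (ι → ℝ) × (ι → ℝ) :=
  (1 / 2 : ℝ) • (ContinuousLinearMap.id ℝ _ + primalDualDeriv F ω n c z)

noncomputable def primalDualWeight (z : (ι → ℝ) × (ι → ℝ)) (i : ι) : ℝ :=
  z.2 i + ω i / (2 * z.1 i ^ 2)

variable {F ω n c}

open ContinuousLinearMap in
theorem hasStrictFDerivAt_primalDualMap {z : (ι → ℝ) × (ι → ℝ)} (hq : ∀ i, z.1 i ≠ 0)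
    (hy : ∀ i, z.2 i ≠ 0) :
    HasStrictFDerivAt (primalDualMap F ω n c) (primalDualDeriv F ω n c z) z := by
  have hq' : ∀ j, HasStrictFDerivAt (fun z : (ι → ℝ) × (ι → ℝ) => z.1 j)
      ((proj j).comp (fst ℝ (ι → ℝ) (ι → ℝ))) z :=
    fun j => ((proj j).comp (fst ℝ (ι → ℝ) (ι → ℝ))).hasStrictFDerivAt
  have hy' : ∀ j, HasStrictFDerivAt (fun z : (ι → ℝ) × (ι → ℝ) => z.2 j)
      ((proj j).comp (snd ℝ (ι → ℝ) (ι → ℝ))) z :=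
    fun j => ((proj j).comp (snd ℝ (ι → ℝ) (ι → ℝ))).hasStrictFDerivAt
  have hinv : ∀ j, HasStrictFDerivAt (fun z : (ι → ℝ) × (ι → ℝ) => (z.1 j)⁻¹) _ z :=
    fun j => (hasStrictFDerivAt_inv (hq j)).comp z (hq' j)
  have h₁ : ∀ i, HasStrictFDerivAt (fun z : (ι → ℝ) × (ι → ℝ) =>
      (∑ j, F j i * z.1 j + ω i) * (z.1 i * z.2 i)⁻¹) _ z := fun i =>
    ((HasStrictFDerivAt.fun_sum fun j _ => (hq' j).const_mul (F j i)).add_const (ω i)).mul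
      ((hasStrictFDerivAt_inv (mul_ne_zero (hq i) (hy i))).comp z ((hq' i).mul (hy' i)))
  have h₂ : ∀ i, HasStrictFDerivAt (fun z : (ι → ℝ) × (ι → ℝ) =>
      ∑ j, F i j * (z.1 j)⁻¹ + 1 / c * n i * ∑ j, ω j * (z.1 j)⁻¹) _ z := fun i =>
    (HasStrictFDerivAt.fun_sum fun j _ => (hinv j).const_mul (F i j)).add
      ((HasStrictFDerivAt.fun_sum fun j _ => (hinv j).const_mul (ω j)).const_mul _)
  refine ((hasStrictFDerivAt_pi.2 h₁).prodMk (hasStrictFDerivAt_pi.2 h₂)).congr_fderiv ?_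
  refine ContinuousLinearMap.ext fun w => Prod.ext (funext fun i => ?_) (funext fun i => ?_)
  · simp only [comp_add, comp_smulₛₗ, Real.ringHom_apply, smul_add, _root_.mul_inv_rev, one_div,
      ContinuousLinearMap.prod_apply, coe_pi', _root_.add_apply, _root_.smul_apply,
      ContinuousLinearMap.comp_apply, coe_snd', proj_apply, toSpanSingleton_apply, smul_eq_mul,
      mul_neg, coe_fst', _root_.sum_apply, sum_neg_distrib, primalDualDeriv, mulVec, dotProduct,
      transpose_apply, primalDualMap, LinearMap.coe_toContinuousLinearMap', LinearMap.coe_mk,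
      AddHom.coe_mk]
    field_simp [hq i, hy i]
    ring
  · simp only [comp_add, comp_smulₛₗ, Real.ringHom_apply, smul_add, _root_.mul_inv_rev, one_div,
      ContinuousLinearMap.prod_apply, coe_pi', _root_.add_apply, _root_.smul_apply,
      ContinuousLinearMap.comp_apply, coe_snd', proj_apply, toSpanSingleton_apply, smul_eq_mul,
      mul_neg, coe_fst', _root_.sum_apply, mul_sum, sum_neg_distrib, primalDualDeriv,
      LinearMap.coe_toContinuousLinearMap', LinearMap.coe_mk, AddHom.coe_mk]
    rw [← neg_add, ← sum_add_distrib]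
    exact congrArg _ (sum_congr rfl fun j _ => by ring)

theorem averagedPrimalDualDeriv_apply {z : (ι → ℝ) × (ι → ℝ)} (hq : ∀ i, z.1 i ≠ 0)
    (hy : ∀ i, z.2 i ≠ 0) (hfix : primalDualMap F ω n c z = z) (w : (ι → ℝ) × (ι → ℝ)) :
    averagedPrimalDualDeriv F ω n c z w =
      (fun i => (∑ j, F j i * w.1 j - z.1 i ^ 2 * w.2 i) / (2 * z.1 i * z.2 i),
       fun i => (w.2 i - ∑ j, (F i j + 1 / c * n i * ω j) / z.1 j ^ 2 * w.1 j) / 2) := by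
  ext i
  · simp only [averagedPrimalDualDeriv, one_div, primalDualDeriv, mulVec, dotProduct,
      transpose_apply, hfix, smul_add, _root_.add_apply, _root_.smul_apply,
      ContinuousLinearMap.id_apply, LinearMap.coe_toContinuousLinearMap', LinearMap.coe_mk,
      AddHom.coe_mk, Prod.smul_mk, Prod.fst_add, Prod.smul_fst, Pi.add_apply, Pi.smul_apply,
      smul_eq_mul]
    field_simp [hq i, hy i]
    ring
  · simp only [averagedPrimalDualDeriv, one_div, primalDualDeriv, smul_add, _root_.add_apply,
      _root_.smul_apply, ContinuousLinearMap.id_apply, LinearMap.coe_toContinuousLinearMap',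
      LinearMap.coe_mk, AddHom.coe_mk, Prod.smul_mk, Prod.snd_add, Prod.smul_snd, Pi.add_apply,
      Pi.smul_apply, smul_eq_mul, mul_neg]
    ring

theorem sum_mul_fst_eq_of_primalDualMap_eq_self {z : (ι → ℝ) × (ι → ℝ)} (hq : ∀ i, z.1 i ≠ 0)
    (hy : ∀ i, z.2 i ≠ 0) (hfix : primalDualMap F ω n c z = z) (i : ι) :
    ∑ j, F j i * z.1 j = z.1 i ^ 2 * z.2 i - ω i := by
  have h := congrFun (congrArg Prod.fst hfix) i
  rw [primalDualMap, div_eq_iff (mul_ne_zero (hq i) (hy i))] at h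
  simp only [mulVec, dotProduct, transpose_apply] at h
  linear_combination h

theorem sum_div_sq_mul_fst_eq_of_primalDualMap_eq_self {z : (ι → ℝ) × (ι → ℝ)}
    (hq : ∀ i, z.1 i ≠ 0) (hfix : primalDualMap F ω n c z = z) (i : ι) :
    ∑ j, (F i j + 1 / c * n i * ω j) / z.1 j ^ 2 * z.1 j = z.2 i := by
  have h := congrFun (congrArg Prod.snd hfix) i
  simp only [primalDualMap, mulVec, dotProduct] at h
  rw [← h, mul_sum, ← sum_add_distrib]
  refine sum_congr rfl fun j _ => ?_
  field_simp [hq j]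

theorem abs_averagedPrimalDualDeriv_fst_le (hF : ∀ i j, 0 ≤ F i j)
    {z : (ι → ℝ) × (ι → ℝ)} (hq : ∀ i, 0 < z.1 i) (hy : ∀ i, 0 < z.2 i)
    (hfix : primalDualMap F ω n c z = z) {w : (ι → ℝ) × (ι → ℝ)} {t : ℝ}
    (hw₁ : ∀ j, |w.1 j| ≤ t * z.1 j) (hw₂ : ∀ j, |w.2 j| ≤ t * primalDualWeight ω z j) (i : ι) :
    |(averagedPrimalDualDeriv F ω n c z w).1 i| ≤
      (1 - ω i / (4 * z.1 i ^ 2 * z.2 i)) * (t * z.1 i) := by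
  have hq₀ : ∀ i, z.1 i ≠ 0 := fun i => (hq i).ne'
  have hy₀ : ∀ i, z.2 i ≠ 0 := fun i => (hy i).ne'
  have hd : 0 < 2 * z.1 i * z.2 i := by have := hq i; have := hy i; positivity
  rw [averagedPrimalDualDeriv_apply hq₀ hy₀ hfix, abs_div, abs_of_pos hd, div_le_iff₀ hd]
  calc |∑ j, F j i * w.1 j - z.1 i ^ 2 * w.2 i|
      ≤ ∑ j, F j i * (t * z.1 j) + z.1 i ^ 2 * (t * primalDualWeight ω z i) := by
        refine (abs_sub _ _).trans (add_le_add (abs_sum_mul_le_sum_mul (fun j => hF j i) hw₁) ?_)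
        rw [abs_mul, abs_of_nonneg (sq_nonneg _)]
        exact mul_le_mul_of_nonneg_left (hw₂ i) (sq_nonneg _)
    _ = (1 - ω i / (4 * z.1 i ^ 2 * z.2 i)) * (t * z.1 i) * (2 * z.1 i * z.2 i) := by
        simp only [mul_left_comm _ t, ← mul_sum,
          sum_mul_fst_eq_of_primalDualMap_eq_self hq₀ hy₀ hfix, primalDualWeight]
        field_simp [hq₀ i, hy₀ i]
        ring

theorem abs_averagedPrimalDualDeriv_snd_le (hF : ∀ i j, 0 ≤ F i j) (hω : ∀ i, 0 < ω i)
    (hn : ∀ i, 0 ≤ n i) (hc : 0 ≤ c) {z : (ι → ℝ) × (ι → ℝ)} (hq : ∀ i, 0 < z.1 i)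
    (hy : ∀ i, 0 < z.2 i) (hfix : primalDualMap F ω n c z = z) {w : (ι → ℝ) × (ι → ℝ)} {t : ℝ}
    (hw₁ : ∀ j, |w.1 j| ≤ t * z.1 j) (hw₂ : ∀ j, |w.2 j| ≤ t * primalDualWeight ω z j) (i : ι) :
    |(averagedPrimalDualDeriv F ω n c z w).2 i| ≤
      (z.2 i + primalDualWeight ω z i) / (2 * primalDualWeight ω z i) *
        (t * primalDualWeight ω z i) := by
  have hq₀ : ∀ i, z.1 i ≠ 0 := fun i => (hq i).ne'
  have hs : 0 < primalDualWeight ω z i := by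
    have := hq i; have := hy i; have := hω i; unfold primalDualWeight; positivity
  have hcoef : ∀ j, 0 ≤ (F i j + 1 / c * n i * ω j) / z.1 j ^ 2 := fun j => by
    have := hF i j; have := hn i; have := hω j; positivity
  rw [averagedPrimalDualDeriv_apply hq₀ (fun i => (hy i).ne') hfix, abs_div, abs_two,
    div_le_iff₀ two_pos]
  calc |w.2 i - ∑ j, (F i j + 1 / c * n i * ω j) / z.1 j ^ 2 * w.1 j|
      ≤ t * primalDualWeight ω z i + ∑ j, (F i j + 1 / c * n i * ω j) / z.1 j ^ 2 * (t * z.1 j) :=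
        (abs_sub _ _).trans (add_le_add (hw₂ i) (abs_sum_mul_le_sum_mul hcoef hw₁))
    _ = _ := by
        simp only [mul_left_comm _ t, ← mul_sum,
          sum_div_sq_mul_fst_eq_of_primalDualMap_eq_self hq₀ hfix]
        field_simp
        ring

theorem exists_norm_conj_averagedPrimalDualDeriv_lt_one (hF : ∀ i j, 0 ≤ F i j)
    (hω : ∀ i, 0 < ω i) (hn : ∀ i, 0 ≤ n i) (hc : 0 ≤ c) {z : (ι → ℝ) × (ι → ℝ)}
    (hq : ∀ i, 0 < z.1 i) (hy : ∀ i, 0 < z.2 i) (hfix : primalDualMap F ω n c z = z) :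
    ∃ e : ((ι → ℝ) × (ι → ℝ)) ≃L[ℝ] (ι → ℝ) × (ι → ℝ),
      ‖(e.symm : ((ι → ℝ) × (ι → ℝ)) →L[ℝ] (ι → ℝ) × (ι → ℝ)) ∘L
        averagedPrimalDualDeriv F ω n c z ∘L (e : ((ι → ℝ) × (ι → ℝ)) →L[ℝ] (ι → ℝ) × (ι → ℝ))‖
        < 1 := by
  set s := primalDualWeight ω z
  have hs : ∀ i, 0 < s i := fun i => by
    have := hq i; have := hy i; have := hω i; unfold s primalDualWeight; positivity
  have hρ₁ : ∀ i, 1 - ω i / (4 * z.1 i ^ 2 * z.2 i) < 1 := fun i => by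
    have := hq i; have := hy i; have := hω i
    exact sub_lt_self _ (by positivity)
  have hρ₂ : ∀ i, (z.2 i + s i) / (2 * s i) < 1 := fun i => by
    have : z.2 i < s i := lt_add_of_pos_right _ (by have := hq i; have := hω i; positivity)
    rw [div_lt_one (by linarith [hs i])]
    linarith
  obtain ⟨κ, hκ1, hκ0, hκ⟩ := exists_nonneg_lt_one_forall_le fun i => max_lt (hρ₁ i) (hρ₂ i)
  refine ⟨diagScale (fun i => .mk0 (z.1 i) (hq i).ne') (fun i => .mk0 (s i) (hs i).ne'),
    (norm_conj_diagScale_le _ _ _ hκ0 fun w t hw₁ hw₂ i => ?_).trans_lt hκ1⟩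
  simp only [Units.val_mk0, abs_of_pos (hq _), abs_of_pos (hs _)] at hw₁ hw₂ ⊢
  have ht : 0 ≤ t := nonneg_of_mul_nonneg_left ((abs_nonneg _).trans (hw₂ i)) (hs i)
  exact ⟨(abs_averagedPrimalDualDeriv_fst_le hF hq hy hfix hw₁ hw₂ i).trans <|
      mul_le_mul_of_nonneg_right ((le_max_left _ _).trans (hκ i)) (mul_nonneg ht (hq i).le),
    (abs_averagedPrimalDualDeriv_snd_le hF hω hn hc hq hy hfix hw₁ hw₂ i).trans <|
      mul_le_mul_of_nonneg_right ((le_max_right _ _).trans (hκ i)) (mul_nonneg ht (hs i).le)⟩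

end PrimalDual

theorem averaged_fixed_point_local_convergence_general
    (N : ℕ) (F : Matrix (Fin N) (Fin N) ℝ)
    (hFd : ∀ i, F i i = 0) (hFo : ∀ i j, i ≠ j → 0 < F i j)
    (ω n : Fin N → ℝ) (hω : ∀ i, 0 < ω i) (hn : ∀ i, 0 < n i)
    (c : ℝ) (hc : 0 < c)
    (T : ((Fin N → ℝ) × (Fin N → ℝ)) → ((Fin N → ℝ) × (Fin N → ℝ)))
    (hT : ∀ z : (Fin N → ℝ) × (Fin N → ℝ),
      T z = (fun i => ((F.transpose.mulVec z.1) i + ω i) / (z.1 i * z.2 i),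
             fun i => (F.mulVec (fun j => (z.1 j)⁻¹)) i
               + (1 / c) * n i * (∑ j, ω j * (z.1 j)⁻¹)))
    (zstar : (Fin N → ℝ) × (Fin N → ℝ))
    (hqpos : ∀ i, 0 < zstar.1 i) (hypos : ∀ i, 0 < zstar.2 i)
    (hfix : T zstar = zstar) :
    ∃ ε > 0, ∀ z₀ : (Fin N → ℝ) × (Fin N → ℝ), ‖z₀ - zstar‖ < ε →
      Tendsto (fun k : ℕ => ((fun z => (1 / 2 : ℝ) • (z + T z))^[k]) z₀)
        atTop (nhds zstar) := by
  obtain rfl : T = primalDualMap F ω n c := funext hT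
  have hF : ∀ i j, 0 ≤ F i j := fun i j => by
    rcases eq_or_ne i j with rfl | hij
    exacts [(hFd i).ge, (hFo i j hij).le]
  have hderiv : HasStrictFDerivAt (fun z => (1 / 2 : ℝ) • (z + primalDualMap F ω n c z))
      (averagedPrimalDualDeriv F ω n c zstar) zstar :=
    ((hasStrictFDerivAt_id zstar).add (hasStrictFDerivAt_primalDualMap (fun i => (hqpos i).ne')
      (fun i => (hypos i).ne'))).const_smul (1 / 2 : ℝ)
  have hfix' : (1 / 2 : ℝ) • (zstar + primalDualMap F ω n c zstar) = zstar := by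
    rw [hfix]
    module
  obtain ⟨e, he⟩ := exists_norm_conj_averagedPrimalDualDeriv_lt_one hF hω (fun i => (hn i).le)
    hc.le hqpos hypos hfix
  obtain ⟨ε, hε, hball⟩ :=
    Metric.eventually_nhds_iff.1 (hderiv.eventually_tendsto_iterate_of_conj e hfix' he)
  exact ⟨ε, hε, fun z₀ hz₀ => hball (by rwa [dist_eq_norm])⟩

/-- Local convergence of the averaged fixed-point iteration
(Theorem 2). -/
theorem averaged_fixed_point_local_convergence
    (N : ℕ) (hN : 2 ≤ N) (F : Matrix (Fin N) (Fin N) ℝ)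
    (hFd : ∀ i, F i i = 0) (hFo : ∀ i j, i ≠ j → 0 < F i j)
    (ω n : Fin N → ℝ) (hω : ∀ i, 0 < ω i) (hn : ∀ i, 0 < n i)
    (c : ℝ) (hc : 0 < c)
    (T : ((Fin N → ℝ) × (Fin N → ℝ)) → ((Fin N → ℝ) × (Fin N → ℝ)))
    (hT : ∀ z : (Fin N → ℝ) × (Fin N → ℝ),
      T z = (fun i => ((F.transpose.mulVec z.1) i + ω i) / (z.1 i * z.2 i),
             fun i => (F.mulVec (fun j => (z.1 j)⁻¹)) i
               + (1 / c) * n i * (∑ j, ω j * (z.1 j)⁻¹)))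
    (zstar : (Fin N → ℝ) × (Fin N → ℝ))
    (hqpos : ∀ i, 0 < zstar.1 i) (hypos : ∀ i, 0 < zstar.2 i)
    (hfix : T zstar = zstar) :
    ∃ ε > 0, ∀ z₀ : (Fin N → ℝ) × (Fin N → ℝ), ‖z₀ - zstar‖ < ε →
      Tendsto (fun k : ℕ => ((fun z => (1 / 2 : ℝ) • (z + T z))^[k]) z₀)
        atTop (nhds zstar) :=
  averaged_fixed_point_local_convergence_general N F hFd hFo ω n hω hn c hc T hT zstar hqpos hypos
    hfix
end
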